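/- arXiv:1010.2855 — 11 statements merged into one kernel-verified Lean document; each statement's English description precedes it below -/
import Mathlib

section
/- Classification theorem: Let (V, ·, *, ⟨;,⟩) be a 2-dimensional real hyporeductive triple algebra. Then there exist a basis u, v of V and real numbers a, b, c, d, e, f, k such that the operations take one of the following eight forms on the basis (since the operations are multilinear with the stated skew-symmetries, they are determined by the values u·v, u*v, ⟨u;u,v⟩, ⟨v;u,v⟩): (I) u*v = 0, u·v = 0, ⟨u;u,v⟩ = e·u + f·v, ⟨v;u,v⟩ = k·u − e·v; (II) u*v = 0, u·v = a·u, ⟨u;u,v⟩ = 0, ⟨v;u,v⟩ = k·u, with a ≠ 0; (III) u*v = 0, u·v = a·u + b·v, ⟨u;u,v⟩ = 0, ⟨v;u,v⟩ = 0, with a ≠ 0, b ≠ 0; (IV) u*v = 0, u·v = a·u + b·v, ⟨u;u,v⟩ = e·u + f·v, ⟨v;u,v⟩ = k·u − e·v, with a ≠ 0, b ≠ 0, e ≠ 0, f ≠ 0, k ≠ −e, a·f − b·e = 0 = b·k + a·e; (V) u*v = c·u + d·v, u·v = 0, ⟨u;u,v⟩ = e·u + f·v, ⟨v;u,v⟩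 = k·u − e·v, with (c,d) ≠ (0,0); (VI) u*v = c·u + d·v, u·v = a·u, ⟨u;u,v⟩ = 0, ⟨v;u,v⟩ = k·u, with a ≠ 0 and (c,d) ≠ (0,0); (VII) u*v = c·u + d·v, u·v = a·u + b·v, ⟨u;u,v⟩ = e·u + f·v, ⟨v;u,v⟩ = k·u − e·v, with a ≠ 0, b ≠ 0, e ≠ 0, f ≠ 0, k ≠ 0, (c,d) ≠ (0,0), a·f − b·e = 0 = b·k + a·e; (VIII) u*v = c·u + d·v, u·v = a·u + b·v, ⟨u;u,v⟩ = 0, ⟨v;u,v⟩ = 0, with a ≠ 0, b ≠ 0, (c,d) ≠ (0,0). -/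
/-- A (binary-binary-ternary) triple algebra: a real vector space with two
bilinear skew-symmetric binary operations `mul` (x·y), `star` (x*y) and a
trilinear operation `tri` (⟨x;y,z⟩) skew-symmetric in its last two arguments. -/
structure TripleAlg (V : Type*) [AddCommGroup V] [Module ℝ V] where
  mul : V → V → V
  star : V → V → V
  tri : V → V → V → V
  mul_add_left : ∀ x y z : V, mul (x + y) z = mul x z + mul y z
  mul_smul_left : ∀ (r : ℝ) (x y : V), mul (r • x) y = r • mul x y
  mul_skew : ∀ x y : V, mul x y = -mul y x
  star_add_left : ∀ x y z : V, star (x + y) z = star x z + star y z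
  star_smul_left : ∀ (r : ℝ) (x y : V), star (r • x) y = r • star x y
  star_skew : ∀ x y : V, star x y = -star y x
  tri_add_fst : ∀ x y z w : V, tri (x + y) z w = tri x z w + tri y z w
  tri_smul_fst : ∀ (r : ℝ) (x z w : V), tri (r • x) z w = r • tri x z w
  tri_add_snd : ∀ x y z w : V, tri x (y + z) w = tri x y w + tri x z w
  tri_smul_snd : ∀ (r : ℝ) (x y w : V), tri x (r • y) w = r • tri x y w
  tri_skew : ∀ x y z : V, tri x y z = -tri x z y

namespace TripleAlg

variable {V : Type*} [AddCommGroup V] [Module ℝ V]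

/-- The summand of identity (11), to be summed cyclically over the pairs
(ξ,η), (ζ,κ), (l,m). -/
def term11 (A : TripleAlg V) (ξ η ζ κ l m : V) : V :=
  A.tri (A.tri (A.mul ξ η) ζ κ + A.mul η (A.tri ξ ζ κ) - A.mul ξ (A.tri η ζ κ)) l m
    + A.tri (A.mul l m) (A.tri η ζ κ) ξ + A.mul m (A.tri l (A.tri η ζ κ) ξ)
    - A.mul l (A.tri m (A.tri η ζ κ) ξ)
    - (A.tri (A.mul l m) (A.tri ξ ζ κ) η + A.mul m (A.tri l (A.tri ξ ζ κ) η)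
        - A.mul l (A.tri m (A.tri ξ ζ κ) η))

/-- The summand of identity (12). -/
def term12 (A : TripleAlg V) (ξ η ζ κ l m : V) : V :=
  A.star (A.tri m (A.tri η ζ κ) ξ - A.tri m (A.tri ξ ζ κ) η) l
    + A.star (A.tri l (A.tri ξ ζ κ) η - A.tri l (A.tri η ζ κ) ξ) m

/-- The summand of identity (13). -/
def term13 (A : TripleAlg V) (θ ξ η ζ κ l m : V) : V :=
  A.tri θ (A.tri m (A.tri η ζ κ) ξ - A.tri m (A.tri ξ ζ κ) η) l
    + A.tri θ (A.tri l (A.tri ξ ζ κ) η - A.tri l (A.tri η ζ κ) ξ) m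

/-- The defining identities (2)–(13) of an (abstract) hyporeductive triple
algebra. -/
def IsHTA (A : TripleAlg V) : Prop :=
  -- (2)
  (∀ ξ η ζ : V,
    A.mul ξ (A.mul η ζ) - A.tri ξ η ζ + A.mul η (A.mul ζ ξ) - A.tri η ζ ξ
      + A.mul ζ (A.mul ξ η) - A.tri ζ ξ η = 0) ∧
  -- (3)
  (∀ ξ η ζ : V,
    A.star ζ (A.mul ξ η) + A.star ξ (A.mul η ζ) + A.star η (A.mul ζ ξ) = 0) ∧
  -- (4)
  (∀ θ ξ η ζ : V,
    A.tri θ ζ (A.mul ξ η) + A.tri θ ξ (A.mul η ζ) + A.tri θ η (A.mul ζ ξ) = 0) ∧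
  -- (5)
  (∀ ξ η ζ κ : V,
    A.mul κ (A.tri ζ ξ η) - A.mul ζ (A.tri κ ξ η) + A.tri (A.mul ζ κ) ξ η =
      A.tri (A.star ξ η) ζ κ - A.tri (A.star ζ κ) ξ η
        + A.star ζ (A.tri κ ξ η) - A.star κ (A.tri ζ ξ η)
        + A.star (A.star ξ η) (A.star ζ κ) + A.mul (A.star ξ η) (A.star ζ κ)) ∧
  -- (6)
  (∀ ξ η ζ κ χ : V,
    A.mul χ (A.mul κ (A.tri ζ ξ η) - A.mul ζ (A.tri κ ξ η) + A.tri (A.mul ζ κ) ξ η)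
      + A.tri (A.tri χ ξ η) ζ κ - A.tri (A.tri χ ζ κ) ξ η
      + A.tri χ ζ (A.tri κ ξ η) - A.tri χ κ (A.tri ζ ξ η) = 0) ∧
  -- (7)
  (∀ ξ η ζ κ χ : V,
    A.star χ (A.mul κ (A.tri ζ ξ η) - A.mul ζ (A.tri κ ξ η) + A.tri (A.mul ζ κ) ξ η) = 0) ∧
  -- (8)
  (∀ ξ η ζ κ θ χ : V,
    A.tri θ χ (A.mul κ (A.tri ζ ξ η) - A.mul ζ (A.tri κ ξ η) + A.tri (A.mul ζ κ) ξ η) = 0) ∧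
  -- (9)
  (∀ ξ η ζ κ : V,
    A.mul κ (A.tri ζ ξ η) - A.mul ζ (A.tri κ ξ η) + A.tri (A.mul ζ κ) ξ η
      + A.mul η (A.tri ξ ζ κ) - A.mul ξ (A.tri η ζ κ) + A.tri (A.mul ξ η) ζ κ = 0) ∧
  -- (10)
  (∀ ξ η ζ κ : V,
    A.star ζ (A.tri κ ξ η) - A.star κ (A.tri ζ ξ η)
      + A.star ξ (A.tri η ζ κ) - A.star η (A.tri ξ ζ κ) = 0) ∧
  -- (11)
  (∀ ξ η ζ κ l m : V,
    A.term11 ξ η ζ κ l m + A.term11 ζ κ l m ξ η + A.term11 l m ξ η ζ κ = 0) ∧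
  -- (12)
  (∀ ξ η ζ κ l m : V,
    A.term12 ξ η ζ κ l m + A.term12 ζ κ l m ξ η + A.term12 l m ξ η ζ κ = 0) ∧
  -- (13)
  (∀ θ ξ η ζ κ l m : V,
    A.term13 θ ξ η ζ κ l m + A.term13 θ ζ κ l m ξ η + A.term13 θ l m ξ η ζ κ = 0)

/-- The expression J(u,v) = u*⟨v;u,v⟩ − v*⟨u;u,v⟩. -/
def J (A : TripleAlg V) (u v : V) : V :=
  A.star u (A.tri v u v) - A.star v (A.tri u u v)

end TripleAlg


namespace TripleAlg
variable {V : Type*} [AddCommGroup V] [Module ℝ V] (A : TripleAlg V)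
variable {V : Type*} [AddCommGroup V] [Module ℝ V] (A : TripleAlg V)

lemma mul_self (x : V) : A.mul x x = 0 := by
  have h := A.mul_skew x x
  have : (2:ℝ) • A.mul x x = 0 := by rw [two_smul]; nth_rewrite 1 [h]; abel
  simpa using this
lemma star_self (x : V) : A.star x x = 0 := by
  have h := A.star_skew x x
  have : (2:ℝ) • A.star x x = 0 := by rw [two_smul]; nth_rewrite 1 [h]; abel
  simpa using this
lemma tri_self (x y : V) : A.tri x y y = 0 := by
  have h := A.tri_skew x y y
  have : (2:ℝ) • A.tri x y y = 0 := by rw [two_smul]; nth_rewrite 1 [h]; abel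
  simpa using this
lemma mul_add_right (x y z : V) : A.mul x (y + z) = A.mul x y + A.mul x z := by
  rw [A.mul_skew x (y+z), A.mul_add_left, A.mul_skew y x, A.mul_skew z x]; abel
lemma mul_smul_right (r : ℝ) (x y : V) : A.mul x (r • y) = r • A.mul x y := by
  rw [A.mul_skew x (r • y), A.mul_smul_left, A.mul_skew y x]; simp
lemma star_add_right (x y z : V) : A.star x (y + z) = A.star x y + A.star x z := by
  rw [A.star_skew x (y+z), A.star_add_left, A.star_skew y x, A.star_skew z x]; abel
lemma star_smul_right (r : ℝ) (x y : V) : A.star x (r • y) = r • A.star x y := by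
  rw [A.star_skew x (r • y), A.star_smul_left, A.star_skew y x]; simp
lemma tri_add_trd (x y z w : V) : A.tri x y (z + w) = A.tri x y z + A.tri x y w := by
  rw [A.tri_skew x y (z+w), A.tri_add_snd, A.tri_skew x z y, A.tri_skew x w y]; abel
lemma tri_smul_trd (r : ℝ) (x y z : V) : A.tri x y (r • z) = r • A.tri x y z := by
  rw [A.tri_skew x y (r • z), A.tri_smul_snd, A.tri_skew x z y]; simp
lemma mul_zero_right (x : V) : A.mul x 0 = 0 := by
  have := A.mul_smul_right 0 x 0; simpa using this
lemma mul_zero_left (x : V) : A.mul 0 x = 0 := by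
  have := A.mul_smul_left 0 x x; simpa using this
lemma star_zero_right (x : V) : A.star x 0 = 0 := by
  have := A.star_smul_right 0 x 0; simpa using this
lemma star_zero_left (x : V) : A.star 0 x = 0 := by
  have := A.star_smul_left 0 x x; simpa using this
lemma mul_neg_right (x y : V) : A.mul x (-y) = -A.mul x y := by
  rw [← neg_one_smul ℝ y, A.mul_smul_right, neg_one_smul]
lemma mul_neg_left (x y : V) : A.mul (-x) y = -A.mul x y := by
  rw [← neg_one_smul ℝ x, A.mul_smul_left, neg_one_smul]
lemma star_neg_right (x y : V) : A.star x (-y) = -A.star x y := by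
  rw [← neg_one_smul ℝ y, A.star_smul_right, neg_one_smul]
lemma star_neg_left (x y : V) : A.star (-x) y = -A.star x y := by
  rw [← neg_one_smul ℝ x, A.star_smul_left, neg_one_smul]
lemma tri_neg_fst (x y z : V) : A.tri (-x) y z = -A.tri x y z := by
  rw [← neg_one_smul ℝ x, A.tri_smul_fst, neg_one_smul]
lemma tri_neg_snd (x y z : V) : A.tri x (-y) z = -A.tri x y z := by
  rw [← neg_one_smul ℝ y, A.tri_smul_snd, neg_one_smul]
lemma tri_neg_trd (x y z : V) : A.tri x y (-z) = -A.tri x y z := by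
  rw [← neg_one_smul ℝ z, A.tri_smul_trd, neg_one_smul]

lemma tri_zero_fst (y z : V) : A.tri 0 y z = 0 := by
  have := A.tri_smul_fst 0 y y z; simpa using this
lemma tri_zero_snd (x z : V) : A.tri x 0 z = 0 := by
  have := A.tri_smul_snd 0 x x z; simpa using this
lemma tri_zero_trd (x y : V) : A.tri x y 0 = 0 := by
  have := A.tri_smul_trd 0 x y y; simpa using this


lemma rep2 (B : Module.Basis (Fin 2) ℝ V) (x : V) :
    x = (B.repr x 0) • B 0 + (B.repr x 1) • B 1 := by
  have := B.sum_repr x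
  rw [Fin.sum_univ_two] at this
  exact this.symm

lemma coeff_zero (B : Module.Basis (Fin 2) ℝ V) {s t : ℝ} (h : s • B 0 + t • B 1 = 0) :
    s = 0 ∧ t = 0 := by
  have h0 := congrArg (fun w => B.repr w 0) h
  have h1 := congrArg (fun w => B.repr w 1) h
  simp [Module.Basis.repr_self, Finsupp.single_apply] at h0 h1
  exact ⟨h0, h1⟩

set_option maxHeartbeats 2000000 in
lemma expand (A : TripleAlg V) (hA : A.IsHTA) (B : Module.Basis (Fin 2) ℝ V) :
    ∃ a b c d e f k : ℝ,
      A.mul (B 0) (B 1) = a • B 0 + b • B 1 ∧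
      A.star (B 0) (B 1) = c • B 0 + d • B 1 ∧
      A.tri (B 0) (B 0) (B 1) = e • B 0 + f • B 1 ∧
      A.tri (B 1) (B 0) (B 1) = k • B 0 + (-e) • B 1 ∧
      a * f = b * e ∧ b * k = -(a * e) := by
  obtain ⟨h2, h3, h4, h5, h6, h7, h8, h9, h10, h11, h12, h13⟩ := hA
  have rep : ∀ x : V, x = (B.repr x 0) • B 0 + (B.repr x 1) • B 1 := by
    intro x
    have := B.sum_repr x
    rw [Fin.sum_univ_two] at this
    exact this.symm
  have coord : ∀ {x y : V}, x = y → ∀ i, B.repr x i = B.repr y i := by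
    rintro x y rfl i; rfl
  set a := B.repr (A.mul (B 0) (B 1)) 0 with ha
  set b := B.repr (A.mul (B 0) (B 1)) 1 with hb
  set c := B.repr (A.star (B 0) (B 1)) 0 with hc
  set d := B.repr (A.star (B 0) (B 1)) 1 with hd
  set e := B.repr (A.tri (B 0) (B 0) (B 1)) 0 with he
  set f := B.repr (A.tri (B 0) (B 0) (B 1)) 1 with hf
  set k := B.repr (A.tri (B 1) (B 0) (B 1)) 0 with hk
  set g := B.repr (A.tri (B 1) (B 0) (B 1)) 1 with hg
  have hM : A.mul (B 0) (B 1) = a • B 0 + b • B 1 := rep _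
  have hS : A.star (B 0) (B 1) = c • B 0 + d • B 1 := rep _
  have hTu : A.tri (B 0) (B 0) (B 1) = e • B 0 + f • B 1 := rep _
  have hTv : A.tri (B 1) (B 0) (B 1) = k • B 0 + g • B 1 := rep _
  have hMvu : A.mul (B 1) (B 0) = -(a • B 0 + b • B 1) := by
    rw [A.mul_skew (B 1) (B 0), hM]
  have hSvu : A.star (B 1) (B 0) = -(c • B 0 + d • B 1) := by
    rw [A.star_skew (B 1) (B 0), hS]
  have hTvu : ∀ x : V, A.tri x (B 1) (B 0) = -A.tri x (B 0) (B 1) := fun x =>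
    A.tri_skew x (B 1) (B 0)
  have hrep0 : B.repr (B 0) = Finsupp.single 0 1 := B.repr_self 0
  have hrep1 : B.repr (B 1) = Finsupp.single 1 1 := B.repr_self 1
  -- identity (9)
  have H9 := h9 (B 0) (B 1) (B 0) (B 1)
  simp only [hTu, hTv, A.tri_add_fst, A.tri_smul_fst, A.tri_add_snd, A.tri_smul_snd,
    A.tri_add_trd, A.tri_smul_trd, A.mul_add_left, A.mul_smul_left, A.mul_add_right,
    A.mul_smul_right, hM, hMvu, A.mul_self, A.tri_self, hTvu, A.tri_zero_fst,
    A.tri_zero_snd, A.tri_zero_trd, A.mul_zero_left, A.mul_zero_right,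
    sub_eq_add_neg, A.mul_neg_right, A.mul_neg_left, A.star_neg_right, A.star_neg_left,
    A.tri_neg_fst, A.tri_neg_snd, A.tri_neg_trd, 
    smul_add, smul_neg, smul_smul, smul_zero, neg_zero, add_zero, zero_add,
    neg_neg, neg_add_rev, zero_smul] at H9
  have R90 := coord H9 0
  have R91 := coord H9 1
  simp only [map_add, map_smul, map_neg, map_zero, hrep0, hrep1, Finsupp.coe_add,
    Finsupp.coe_smul, Finsupp.coe_neg, Pi.add_apply, Pi.smul_apply, Pi.neg_apply,
    Finsupp.single_apply, Finsupp.coe_zero, Pi.zero_apply, smul_eq_mul] at R90 R91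
  norm_num at R90 R91
  have R1 : b * k = a * g := by linarith
  have R2 : a * f = b * e := by linarith
  have H6a := h6 (B 0) (B 1) (B 0) (B 1) (B 0)
  have H6b := h6 (B 0) (B 1) (B 0) (B 1) (B 1)
  simp only [hTu, hTv, A.tri_add_fst, A.tri_smul_fst, A.tri_add_snd, A.tri_smul_snd,
    A.tri_add_trd, A.tri_smul_trd, A.mul_add_left, A.mul_smul_left, A.mul_add_right,
    A.mul_smul_right, hM, hMvu, A.mul_self, A.tri_self, hTvu, A.tri_zero_fst,
    A.tri_zero_snd, A.tri_zero_trd, A.mul_zero_left, A.mul_zero_right,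
    sub_eq_add_neg, A.mul_neg_right, A.mul_neg_left, A.star_neg_right, A.star_neg_left,
    A.tri_neg_fst, A.tri_neg_snd, A.tri_neg_trd, 
    smul_add, smul_neg, smul_smul, smul_zero, neg_zero, add_zero, zero_add,
    neg_neg, neg_add_rev, zero_smul] at H6a
  simp only [hTu, hTv, A.tri_add_fst, A.tri_smul_fst, A.tri_add_snd, A.tri_smul_snd,
    A.tri_add_trd, A.tri_smul_trd, A.mul_add_left, A.mul_smul_left, A.mul_add_right,
    A.mul_smul_right, hM, hMvu, A.mul_self, A.tri_self, hTvu, A.tri_zero_fst,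
    A.tri_zero_snd, A.tri_zero_trd, A.mul_zero_left, A.mul_zero_right,
    sub_eq_add_neg, A.mul_neg_right, A.mul_neg_left, A.star_neg_right, A.star_neg_left,
    A.tri_neg_fst, A.tri_neg_snd, A.tri_neg_trd, 
    smul_add, smul_neg, smul_smul, smul_zero, neg_zero, add_zero, zero_add,
    neg_neg, neg_add_rev, zero_smul] at H6b
  have R6a := coord H6a 0
  have R6b := coord H6b 1
  simp only [map_add, map_smul, map_neg, map_zero, hrep0, hrep1, Finsupp.coe_add,
    Finsupp.coe_smul, Finsupp.coe_neg, Pi.add_apply, Pi.smul_apply, Pi.neg_apply,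
    Finsupp.single_apply, Finsupp.coe_zero, Pi.zero_apply, smul_eq_mul] at R6a R6b
  norm_num at R6a R6b
  -- expected: e*(e+g) = 0 and g*(e+g) = 0 modulo R1, R2
  have Ree : e * (e + g) = 0 := by linear_combination R6a - a * R2
  have Rgg : g * (e + g) = 0 := by linear_combination R6b + b * R1
  have hge : g = -e := by nlinarith [Ree, Rgg, sq_nonneg (e + g)]
  refine ⟨a, b, c, d, e, f, k, hM, hS, hTu, ?_, R2, ?_⟩
  · rw [hTv, hge]
  · rw [R1, hge]; ring


end TripleAlg
/-- Classification of 2-dimensional real hyporeductive triple algebras. -/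
theorem classification_two_dim_hta {V : Type*} [AddCommGroup V] [Module ℝ V]
    (hdim : Module.finrank ℝ V = 2) (A : TripleAlg V) (hA : A.IsHTA) :
    ∃ (B : Module.Basis (Fin 2) ℝ V) (a b c d e f k : ℝ),
      -- (I)
      ((A.star (B 0) (B 1) = 0 ∧ A.mul (B 0) (B 1) = 0 ∧
        A.tri (B 0) (B 0) (B 1) = e • B 0 + f • B 1 ∧
        A.tri (B 1) (B 0) (B 1) = k • B 0 - e • B 1) ∨
      -- (II)
      (A.star (B 0) (B 1) = 0 ∧ A.mul (B 0) (B 1) = a • B 0 ∧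
        A.tri (B 0) (B 0) (B 1) = 0 ∧ A.tri (B 1) (B 0) (B 1) = k • B 0 ∧
        a ≠ 0) ∨
      -- (III)
      (A.star (B 0) (B 1) = 0 ∧ A.mul (B 0) (B 1) = a • B 0 + b • B 1 ∧
        A.tri (B 0) (B 0) (B 1) = 0 ∧ A.tri (B 1) (B 0) (B 1) = 0 ∧
        a ≠ 0 ∧ b ≠ 0) ∨
      -- (IV)
      (A.star (B 0) (B 1) = 0 ∧ A.mul (B 0) (B 1) = a • B 0 + b • B 1 ∧
        A.tri (B 0) (B 0) (B 1) = e • B 0 + f • B 1 ∧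
        A.tri (B 1) (B 0) (B 1) = k • B 0 - e • B 1 ∧
        a ≠ 0 ∧ b ≠ 0 ∧ e ≠ 0 ∧ f ≠ 0 ∧ k ≠ -e ∧
        a * f - b * e = 0 ∧ b * k + a * e = 0) ∨
      -- (V)
      (A.star (B 0) (B 1) = c • B 0 + d • B 1 ∧ A.mul (B 0) (B 1) = 0 ∧
        A.tri (B 0) (B 0) (B 1) = e • B 0 + f • B 1 ∧
        A.tri (B 1) (B 0) (B 1) = k • B 0 - e • B 1 ∧
        (c, d) ≠ (0, 0)) ∨
      -- (VI)
      (A.star (B 0) (B 1) = c • B 0 + d • B 1 ∧ A.mul (B 0) (B 1) = a • B 0 ∧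
        A.tri (B 0) (B 0) (B 1) = 0 ∧ A.tri (B 1) (B 0) (B 1) = k • B 0 ∧
        a ≠ 0 ∧ (c, d) ≠ (0, 0)) ∨
      -- (VII)
      (A.star (B 0) (B 1) = c • B 0 + d • B 1 ∧
        A.mul (B 0) (B 1) = a • B 0 + b • B 1 ∧
        A.tri (B 0) (B 0) (B 1) = e • B 0 + f • B 1 ∧
        A.tri (B 1) (B 0) (B 1) = k • B 0 - e • B 1 ∧
        a ≠ 0 ∧ b ≠ 0 ∧ e ≠ 0 ∧ f ≠ 0 ∧ k ≠ 0 ∧ (c, d) ≠ (0, 0) ∧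
        a * f - b * e = 0 ∧ b * k + a * e = 0) ∨
      -- (VIII)
      (A.star (B 0) (B 1) = c • B 0 + d • B 1 ∧
        A.mul (B 0) (B 1) = a • B 0 + b • B 1 ∧
        A.tri (B 0) (B 0) (B 1) = 0 ∧ A.tri (B 1) (B 0) (B 1) = 0 ∧
        a ≠ 0 ∧ b ≠ 0 ∧ (c, d) ≠ (0, 0))) := by
  haveI : FiniteDimensional ℝ V := FiniteDimensional.of_finrank_eq_succ hdim
  set B := Module.finBasisOfFinrankEq ℝ V hdim with hBdef
  obtain ⟨a, b, c, d, e, f, k, hM, hS, hTu, hTv, R2, R1⟩ := TripleAlg.expand A hA B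
  have hTv' : A.tri (B 1) (B 0) (B 1) = k • B 0 - e • B 1 := by
    rw [hTv, neg_smul, ← sub_eq_add_neg]
  by_cases hcd : c = 0 ∧ d = 0
  · have hS0 : A.star (B 0) (B 1) = 0 := by rw [hS, hcd.1, hcd.2]; simp
    by_cases hab : a = 0 ∧ b = 0
    · exact ⟨B, 0, 0, 0, 0, e, f, k, Or.inl ⟨hS0, by rw [hM, hab.1, hab.2]; simp, hTu, hTv'⟩⟩
    · by_cases hb : b = 0
      · have ha : a ≠ 0 := fun h => hab ⟨h, hb⟩
        have hf0 : f = 0 := by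
          have hz : a * f = 0 := by rw [R2, hb]; ring
          exact (mul_eq_zero.mp hz).resolve_left ha
        have he0 : e = 0 := by
          have hz : a * e = 0 := by rw [hb] at R1; linarith
          exact (mul_eq_zero.mp hz).resolve_left ha
        refine ⟨B, a, 0, 0, 0, 0, 0, k, Or.inr (Or.inl ⟨hS0, ?_, ?_, ?_, ha⟩)⟩
        · rw [hM, hb]; simp
        · rw [hTu, he0, hf0]; simp
        · rw [hTv', he0]; simp
      · by_cases ha : a = 0
        · -- swap the basis
          have he0 : e = 0 := by
            have hz : b * e = 0 := by rw [← R2, ha]; ring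
            exact (mul_eq_zero.mp hz).resolve_left hb
          have hk0 : k = 0 := by
            have hz : b * k = 0 := by rw [R1, ha]; ring
            exact (mul_eq_zero.mp hz).resolve_left hb
          refine ⟨B.reindex (Equiv.swap 0 1), -b, 0, 0, 0, 0, 0, -f,
            Or.inr (Or.inl ⟨?_, ?_, ?_, ?_, neg_ne_zero.mpr hb⟩)⟩ <;>
            simp only [Module.Basis.reindex_apply, Equiv.symm_swap, Equiv.swap_apply_left,
              Equiv.swap_apply_right]
          · rw [A.star_skew, hS0, neg_zero]
          · rw [A.mul_skew, hM, ha]; module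
          · rw [A.tri_skew, hTv, hk0, he0]; simp
          · rw [A.tri_skew, hTu, he0]; module
        · by_cases he : e = 0
          · have hf0 : f = 0 := by
              have hz : a * f = 0 := by rw [R2, he]; ring
              exact (mul_eq_zero.mp hz).resolve_left ha
            have hk0 : k = 0 := by
              have hz : b * k = 0 := by rw [R1, he]; ring
              exact (mul_eq_zero.mp hz).resolve_left hb
            refine ⟨B, a, b, 0, 0, 0, 0, 0, Or.inr (Or.inr (Or.inl ⟨hS0, hM, ?_, ?_, ha, hb⟩))⟩
            · rw [hTu, he, hf0]; simp
            · rw [hTv', he, hk0]; simp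
          · have hf : f ≠ 0 := fun h => he <| by
              have hz : b * e = 0 := by rw [← R2, h]; ring
              exact (mul_eq_zero.mp hz).resolve_left hb
            by_cases hke : k = -e
            · -- change of basis u' = u, v' = 2u + v
              have hba : b = a := by
                have hz : (b - a) * e = 0 := by rw [hke] at R1; linarith
                have := (mul_eq_zero.mp hz).resolve_right he
                linarith
              have hfe : f = e := by
                have hz : a * (f - e) = 0 := by rw [hba] at R2; linarith
                have := (mul_eq_zero.mp hz).resolve_left ha
                linarith
              have hli : LinearIndependent ℝ ![B 0, (2:ℝ) • B 0 + B 1] := by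
                rw [LinearIndependent.pair_iff]
                intro s t hst
                have hst' : (s + 2 * t) • B 0 + t • B 1 = 0 := by
                  rw [← hst]; module
                obtain ⟨h1, h2⟩ := TripleAlg.coeff_zero B hst'
                constructor <;> linarith
              have hsp : ⊤ ≤ Submodule.span ℝ (Set.range ![B 0, (2:ℝ) • B 0 + B 1]) := by
                have hm0 : B 0 ∈ Set.range ![B 0, (2:ℝ) • B 0 + B 1] := by
                  exact ⟨0, by simp⟩
                have hm1 : (2:ℝ) • B 0 + B 1 ∈ Set.range ![B 0, (2:ℝ) • B 0 + B 1] := by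
                  exact ⟨1, by simp⟩
                have h0 : B 0 ∈ Submodule.span ℝ (Set.range ![B 0, (2:ℝ) • B 0 + B 1]) :=
                  Submodule.subset_span hm0
                have h1 : (2:ℝ) • B 0 + B 1 ∈
                    Submodule.span ℝ (Set.range ![B 0, (2:ℝ) • B 0 + B 1]) :=
                  Submodule.subset_span hm1
                have hv : B 1 ∈ Submodule.span ℝ (Set.range ![B 0, (2:ℝ) • B 0 + B 1]) := by
                  have heq : B 1 = ((2:ℝ) • B 0 + B 1) - (2:ℝ) • B 0 := by module
                  have hv' := sub_mem h1 (Submodule.smul_mem _ (2:ℝ) h0)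
                  rw [← heq] at hv'
                  exact hv'
                rintro x -
                rw [TripleAlg.rep2 B x]
                exact add_mem (Submodule.smul_mem _ _ h0) (Submodule.smul_mem _ _ hv)
              refine ⟨Module.Basis.mk hli hsp, -a, a, 0, 0, -e, e, -e,
                Or.inr (Or.inr (Or.inr (Or.inl ⟨?_, ?_, ?_, ?_, neg_ne_zero.mpr ha, ha,
                  neg_ne_zero.mpr he, he, ?_, by ring, by ring⟩)))⟩ <;>
                (try simp only [Module.Basis.mk_apply, Matrix.cons_val_zero, Matrix.cons_val_one,
                  Matrix.head_cons])
              · simp [A.star_add_right, A.star_smul_right, A.star_self, hS0]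
              · have hcomp : A.mul (B 0) ((2:ℝ) • B 0 + B 1) = a • B 0 + a • B 1 := by
                  rw [A.mul_add_right, A.mul_smul_right, A.mul_self, hM, hba]
                  module
                rw [hcomp]; module
              · have hcomp : A.tri (B 0) (B 0) ((2:ℝ) • B 0 + B 1) = e • B 0 + e • B 1 := by
                  rw [A.tri_add_trd, A.tri_smul_trd, A.tri_self, hTu, hfe]
                  module
                rw [hcomp]; module
              · have hcomp : A.tri ((2:ℝ) • B 0 + B 1) (B 0) ((2:ℝ) • B 0 + B 1) =
                    e • B 0 + e • B 1 := by
                  rw [A.tri_add_trd, A.tri_smul_trd, A.tri_self, A.tri_add_fst, A.tri_smul_fst,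
                    hTu, hTv, hke, hfe]
                  module
                rw [hcomp]; module
              · intro hcon
                apply he
                linarith [neg_eq_iff_eq_neg.mp hcon]
            · refine ⟨B, a, b, 0, 0, e, f, k, Or.inr (Or.inr (Or.inr (Or.inl
                ⟨hS0, hM, hTu, hTv', ha, hb, he, hf, hke, by linarith, by linarith⟩)))⟩
  · have hcd' : (c, d) ≠ (0, 0) := by simpa [Prod.ext_iff] using hcd
    by_cases hab : a = 0 ∧ b = 0
    · exact ⟨B, 0, 0, c, d, e, f, k, Or.inr (Or.inr (Or.inr (Or.inr (Or.inl
        ⟨hS, by rw [hM, hab.1, hab.2]; simp, hTu, hTv', hcd'⟩))))⟩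
    · by_cases hb : b = 0
      · have ha : a ≠ 0 := fun h => hab ⟨h, hb⟩
        have hf0 : f = 0 := by
          have hz : a * f = 0 := by rw [R2, hb]; ring
          exact (mul_eq_zero.mp hz).resolve_left ha
        have he0 : e = 0 := by
          have hz : a * e = 0 := by rw [hb] at R1; linarith
          exact (mul_eq_zero.mp hz).resolve_left ha
        refine ⟨B, a, 0, c, d, 0, 0, k, Or.inr (Or.inr (Or.inr (Or.inr (Or.inr (Or.inl
          ⟨hS, ?_, ?_, ?_, ha, hcd'⟩)))))⟩
        · rw [hM, hb]; simp
        · rw [hTu, he0, hf0]; simp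
        · rw [hTv', he0]; simp
      · by_cases ha : a = 0
        · have he0 : e = 0 := by
            have hz : b * e = 0 := by rw [← R2, ha]; ring
            exact (mul_eq_zero.mp hz).resolve_left hb
          have hk0 : k = 0 := by
            have hz : b * k = 0 := by rw [R1, ha]; ring
            exact (mul_eq_zero.mp hz).resolve_left hb
          refine ⟨B.reindex (Equiv.swap 0 1), -b, 0, -d, -c, 0, 0, -f,
            Or.inr (Or.inr (Or.inr (Or.inr (Or.inr (Or.inl
              ⟨?_, ?_, ?_, ?_, neg_ne_zero.mpr hb, ?_⟩)))))⟩ <;>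
            (try simp only [Module.Basis.reindex_apply, Equiv.symm_swap, Equiv.swap_apply_left,
              Equiv.swap_apply_right])
          · rw [A.star_skew, hS]; module
          · rw [A.mul_skew, hM, ha]; module
          · rw [A.tri_skew, hTv, hk0, he0]; simp
          · rw [A.tri_skew, hTu, he0]; module
          · simp only [Ne, Prod.mk.injEq, not_and, neg_eq_zero]
            intro hd0 hc0
            exact hcd ⟨hc0, hd0⟩
        · by_cases he : e = 0
          · have hf0 : f = 0 := by
              have hz : a * f = 0 := by rw [R2, he]; ring
              exact (mul_eq_zero.mp hz).resolve_left ha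
            have hk0 : k = 0 := by
              have hz : b * k = 0 := by rw [R1, he]; ring
              exact (mul_eq_zero.mp hz).resolve_left hb
            refine ⟨B, a, b, c, d, 0, 0, 0, Or.inr (Or.inr (Or.inr (Or.inr (Or.inr (Or.inr
              (Or.inr ⟨hS, hM, ?_, ?_, ha, hb, hcd'⟩))))))⟩
            · rw [hTu, he, hf0]; simp
            · rw [hTv', he, hk0]; simp
          · have hf : f ≠ 0 := fun h => he <| by
              have hz : b * e = 0 := by rw [← R2, h]; ring
              exact (mul_eq_zero.mp hz).resolve_left hb
            have hk : k ≠ 0 := fun h => he <| by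
              have hz : a * e = 0 := by rw [h] at R1; linarith
              exact (mul_eq_zero.mp hz).resolve_left ha
            exact ⟨B, a, b, c, d, e, f, k, Or.inr (Or.inr (Or.inr (Or.inr (Or.inr (Or.inr
              (Or.inl ⟨hS, hM, hTu, hTv', ha, hb, he, hf, hk, hcd',
                by linarith, by linarith⟩))))))⟩
end

section
/- Corollary 1: Let (V, ·, *, ⟨;,⟩) be a 2-dimensional real hyporeductive triple algebra that is nontrivial, i.e. the operation · is not identically zero and the operation * is not identically zero. Then there exist a basis u, v of V and real numbers a, b, c, d, e, f, k such that the operations take one of the following three forms on the basis: (VI) u*v = c·u + d·v, u·v = a·u, ⟨u;u,v⟩ = 0, ⟨v;u,v⟩ = k·u, with a ≠ 0 and (c,d) ≠ (0,0); (VII) u*v = c·u + d·v, u·v = a·u + b·v, ⟨u;u,v⟩ = e·u + f·v, ⟨v;u,v⟩ = k·u − e·v, with a ≠ 0, b ≠ 0, e ≠ 0, f ≠ 0, k ≠ 0, (c,d) ≠ (0,0), a·f − b·e = 0 = b·k + a·e; (VIII) u*v = c·u + d·v, u·v = a·u + b·v, ⟨u;u,v⟩ = 0, ⟨v;u,v⟩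 = 0, with a ≠ 0, b ≠ 0, (c,d) ≠ (0,0). -/
section Aux
variable {V : Type*} [AddCommGroup V] [Module ℝ V] (A : TripleAlg V)

lemma TripleAlg.mul_self' (x : V) : A.mul x x = 0 := by
  have h := A.mul_skew x x
  have h2 : (2 : ℝ) • A.mul x x = 0 := by rw [two_smul]; nth_rewrite 1 [h]; abel
  simpa using (smul_eq_zero.mp h2).resolve_left (by norm_num)

lemma TripleAlg.star_self' (x : V) : A.star x x = 0 := by
  have h := A.star_skew x x
  have h2 : (2 : ℝ) • A.star x x = 0 := by rw [two_smul]; nth_rewrite 1 [h]; abel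
  simpa using (smul_eq_zero.mp h2).resolve_left (by norm_num)

lemma TripleAlg.tri_self' (x y : V) : A.tri x y y = 0 := by
  have h := A.tri_skew x y y
  have h2 : (2 : ℝ) • A.tri x y y = 0 := by rw [two_smul]; nth_rewrite 1 [h]; abel
  simpa using (smul_eq_zero.mp h2).resolve_left (by norm_num)

lemma TripleAlg.mul_add_right' (x y z : V) :
    A.mul x (y + z) = A.mul x y + A.mul x z := by
  rw [A.mul_skew x (y + z), A.mul_add_left, A.mul_skew y x, A.mul_skew z x]; abel

lemma TripleAlg.mul_smul_right' (r : ℝ) (x y : V) :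
    A.mul x (r • y) = r • A.mul x y := by
  rw [A.mul_skew x (r • y), A.mul_smul_left, A.mul_skew y x, smul_neg]; abel

lemma TripleAlg.star_add_right' (x y z : V) :
    A.star x (y + z) = A.star x y + A.star x z := by
  rw [A.star_skew x (y + z), A.star_add_left, A.star_skew y x, A.star_skew z x]; abel

lemma TripleAlg.star_smul_right' (r : ℝ) (x y : V) :
    A.star x (r • y) = r • A.star x y := by
  rw [A.star_skew x (r • y), A.star_smul_left, A.star_skew y x, smul_neg]; abel

lemma TripleAlg.tri_add_thd' (x y z w : V) :
    A.tri x y (z + w) = A.tri x y z + A.tri x y w := by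
  rw [A.tri_skew x y (z + w), A.tri_add_snd, A.tri_skew x z y, A.tri_skew x w y]; abel

lemma TripleAlg.tri_smul_thd' (r : ℝ) (x y z : V) :
    A.tri x y (r • z) = r • A.tri x y z := by
  rw [A.tri_skew x y (r • z), A.tri_smul_snd, A.tri_skew x z y, smul_neg]; abel

lemma repr_two' (B : Module.Basis (Fin 2) ℝ V) (w : V) :
    w = B.repr w 0 • B 0 + B.repr w 1 • B 1 := by
  have h := B.sum_repr w
  rw [Fin.sum_univ_two] at h
  exact h.symm

lemma coords_two (B : Module.Basis (Fin 2) ℝ V) {α β : ℝ}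
    (h : α • B 0 + β • B 1 = 0) : α = 0 ∧ β = 0 := by
  have li := Fintype.linearIndependent_iff.mp B.linearIndependent
  have h2 := li ![α, β] (by rw [Fin.sum_univ_two]; simpa using h)
  exact ⟨h2 0, h2 1⟩

lemma TripleAlg.mul_all_zero (B : Module.Basis (Fin 2) ℝ V)
    (h : A.mul (B 0) (B 1) = 0) (x y : V) : A.mul x y = 0 := by
  have h' : A.mul (B 1) (B 0) = 0 := by rw [A.mul_skew, h, neg_zero]
  rw [repr_two' B x, repr_two' B y]
  simp [A.mul_add_left, A.mul_smul_left, A.mul_add_right', A.mul_smul_right',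
    A.mul_self', h, h']

lemma TripleAlg.star_all_zero (B : Module.Basis (Fin 2) ℝ V)
    (h : A.star (B 0) (B 1) = 0) (x y : V) : A.star x y = 0 := by
  have h' : A.star (B 1) (B 0) = 0 := by rw [A.star_skew, h, neg_zero]
  rw [repr_two' B x, repr_two' B y]
  simp [A.star_add_left, A.star_smul_left, A.star_add_right', A.star_smul_right',
    A.star_self', h, h']

end Aux

/-- Corollary 1: a nontrivial 2-dimensional real hyporeductive triple algebra
(both binary operations not identically zero) is of type (VI), (VII) or (VIII). -/
theorem nontrivial_two_dim_hta {V : Type*} [AddCommGroup V] [Module ℝ V]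
    (hdim : Module.finrank ℝ V = 2) (A : TripleAlg V) (hA : A.IsHTA)
    (hmul_ne : ∃ x y : V, A.mul x y ≠ 0) (hstar_ne : ∃ x y : V, A.star x y ≠ 0) :
    ∃ (B : Module.Basis (Fin 2) ℝ V) (a b c d e f k : ℝ),
      -- (VI)
      ((A.star (B 0) (B 1) = c • B 0 + d • B 1 ∧ A.mul (B 0) (B 1) = a • B 0 ∧
        A.tri (B 0) (B 0) (B 1) = 0 ∧ A.tri (B 1) (B 0) (B 1) = k • B 0 ∧
        a ≠ 0 ∧ (c, d) ≠ (0, 0)) ∨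
      -- (VII)
      (A.star (B 0) (B 1) = c • B 0 + d • B 1 ∧
        A.mul (B 0) (B 1) = a • B 0 + b • B 1 ∧
        A.tri (B 0) (B 0) (B 1) = e • B 0 + f • B 1 ∧
        A.tri (B 1) (B 0) (B 1) = k • B 0 - e • B 1 ∧
        a ≠ 0 ∧ b ≠ 0 ∧ e ≠ 0 ∧ f ≠ 0 ∧ k ≠ 0 ∧ (c, d) ≠ (0, 0) ∧
        a * f - b * e = 0 ∧ b * k + a * e = 0) ∨
      -- (VIII)
      (A.star (B 0) (B 1) = c • B 0 + d • B 1 ∧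
        A.mul (B 0) (B 1) = a • B 0 + b • B 1 ∧
        A.tri (B 0) (B 0) (B 1) = 0 ∧ A.tri (B 1) (B 0) (B 1) = 0 ∧
        a ≠ 0 ∧ b ≠ 0 ∧ (c, d) ≠ (0, 0))) := by
  have hfd : FiniteDimensional ℝ V := Module.finite_of_finrank_pos (by omega)
  obtain ⟨_, _, _, _, _, _, _, h9, h10, _, _, _⟩ := hA
  set B : Module.Basis (Fin 2) ℝ V := Module.finBasisOfFinrankEq ℝ V hdim with hB
  obtain ⟨a, b, hm⟩ : ∃ a b : ℝ, A.mul (B 0) (B 1) = a • B 0 + b • B 1 :=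
    ⟨_, _, repr_two' B _⟩
  obtain ⟨c, d, hs⟩ : ∃ c d : ℝ, A.star (B 0) (B 1) = c • B 0 + d • B 1 :=
    ⟨_, _, repr_two' B _⟩
  obtain ⟨p, q, hT0⟩ : ∃ p q : ℝ, A.tri (B 0) (B 0) (B 1) = p • B 0 + q • B 1 :=
    ⟨_, _, repr_two' B _⟩
  obtain ⟨r, s, hT1⟩ : ∃ r s : ℝ, A.tri (B 1) (B 0) (B 1) = r • B 0 + s • B 1 :=
    ⟨_, _, repr_two' B _⟩
  have hm' : A.mul (B 1) (B 0) = -(a • B 0 + b • B 1) := by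
    rw [A.mul_skew (B 1) (B 0), hm]
  have hs' : A.star (B 1) (B 0) = -(c • B 0 + d • B 1) := by
    rw [A.star_skew (B 1) (B 0), hs]
  -- nondegeneracy
  have hab : ¬(a = 0 ∧ b = 0) := by
    rintro ⟨rfl, rfl⟩
    obtain ⟨x, y, hxy⟩ := hmul_ne
    exact hxy (A.mul_all_zero B (by simpa using hm) x y)
  have hcd : ¬(c = 0 ∧ d = 0) := by
    rintro ⟨rfl, rfl⟩
    obtain ⟨x, y, hxy⟩ := hstar_ne
    exact hxy (A.star_all_zero B (by simpa using hs) x y)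
  have hcdne : (c, d) ≠ (0, 0) := fun h =>
    hcd ⟨congrArg Prod.fst h, congrArg Prod.snd h⟩
  -- identity (9) at (u,v,u,v)
  have key9 : (2 * (b * r - a * s)) • B 0 + (2 * (a * q - b * p)) • B 1 = 0 := by
    have h := h9 (B 0) (B 1) (B 0) (B 1)
    rw [← h]
    simp only [hm, hm', hT0, hT1, A.mul_add_right', A.mul_smul_right', A.mul_self',
      A.tri_add_fst, A.tri_smul_fst]
    module
  -- identity (10) at (u,v,u,v)
  have key10 : (2 * (c * (p + s))) • B 0 + (2 * (d * (p + s))) • B 1 = 0 := by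
    have h := h10 (B 0) (B 1) (B 0) (B 1)
    rw [← h]
    simp only [hs, hs', hT0, hT1, A.star_add_right', A.star_smul_right', A.star_self']
    module
  obtain ⟨e9u, e9v⟩ := coords_two B key9
  obtain ⟨e10u, e10v⟩ := coords_two B key10
  have hbras : b * r = a * s := by linarith
  have haqbp : a * q = b * p := by linarith
  have hsp : s = -p := by
    rcases eq_or_ne (p + s) 0 with h0 | h0
    · linarith
    · exact absurd ⟨by
        have := mul_eq_zero.mp (by linarith : c * (p + s) = 0)
        tauto, by
        have := mul_eq_zero.mp (by linarith : d * (p + s) = 0)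
        tauto⟩ hcd
  by_cases hb : b = 0
  · -- type (VI) in the basis B
    have ha : a ≠ 0 := fun h0 => hab ⟨h0, hb⟩
    have hq : q = 0 := by
      have : a * q = 0 := by rw [haqbp, hb]; ring
      exact (mul_eq_zero.mp this).resolve_left ha
    have hs0 : s = 0 := by
      have : a * s = 0 := by rw [← hbras, hb]; ring
      exact (mul_eq_zero.mp this).resolve_left ha
    have hp0 : p = 0 := by rw [hsp] at hs0; linarith
    refine ⟨B, a, 0, c, d, 0, 0, r, Or.inl ⟨hs, ?_, ?_, ?_, ha, hcdne⟩⟩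
    · rw [hm, hb]; module
    · rw [hT0, hq, hp0]; module
    · rw [hT1, hs0]; module
  · by_cases ha : a = 0
    · -- swap the basis, get type (VI)
      have hp0 : p = 0 := by
        have : b * p = 0 := by rw [← haqbp, ha]; ring
        exact (mul_eq_zero.mp this).resolve_left hb
      have hs0 : s = 0 := by rw [hsp, hp0]; ring
      have hr0 : r = 0 := by
        have : b * r = 0 := by rw [hbras, hs0]; ring
        exact (mul_eq_zero.mp this).resolve_left hb
      set B' : Module.Basis (Fin 2) ℝ V := B.reindex (Equiv.swap 0 1) with hB'
      have hb0 : B' 0 = B 1 := by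
        rw [hB', Module.Basis.reindex_apply]
        norm_num
      have hb1 : B' 1 = B 0 := by
        rw [hB', Module.Basis.reindex_apply]
        norm_num
      refine ⟨B', -b, 0, -d, -c, 0, 0, -q, Or.inl ⟨?_, ?_, ?_, ?_,
        neg_ne_zero.mpr hb, ?_⟩⟩
      · rw [hb0, hb1, hs']; module
      · rw [hb0, hb1, hm', ha]; module
      · rw [hb0, hb1, A.tri_skew (B 1) (B 1) (B 0), hT1, hr0, hs0]; module
      · rw [hb0, hb1, A.tri_skew (B 0) (B 1) (B 0), hT0, hp0]; module
      · intro h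
        exact hcd ⟨by have := congrArg Prod.snd h; simpa using this,
          by have := congrArg Prod.fst h; simpa using this⟩
    · by_cases hp : p = 0
      · -- type (VIII)
        have hq : q = 0 := by
          have : a * q = 0 := by rw [haqbp, hp]; ring
          exact (mul_eq_zero.mp this).resolve_left ha
        have hs0 : s = 0 := by rw [hsp, hp]; ring
        have hr0 : r = 0 := by
          have : b * r = 0 := by rw [hbras, hs0]; ring
          exact (mul_eq_zero.mp this).resolve_left hb
        refine ⟨B, a, b, c, d, 0, 0, 0, Or.inr (Or.inr ⟨hs, hm, ?_, ?_, ha, hb, hcdne⟩)⟩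
        · rw [hT0, hp, hq]; module
        · rw [hT1, hr0, hs0]; module
      · -- type (VII)
        have hq : q ≠ 0 := fun h0 => hp (by
          have : b * p = 0 := by rw [← haqbp, h0]; ring
          exact (mul_eq_zero.mp this).resolve_left hb)
        have hr : r ≠ 0 := fun h0 => hp (by
          have : a * s = 0 := by rw [← hbras, h0]; ring
          have hs0 : s = 0 := (mul_eq_zero.mp this).resolve_left ha
          rw [hsp] at hs0; linarith)
        refine ⟨B, a, b, c, d, p, q, r, Or.inr (Or.inl ⟨hs, hm, hT0, ?_,
          ha, hb, hp, hq, hr, hcdne, by linarith, ?_⟩)⟩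
        · rw [hT1, hsp]; module
        · have : b * r + a * p = a * s + a * p := by rw [hbras]
          rw [hsp] at this; linarith
end

section
/- Existence of a nontrivial 2-dimensional real hyporeductive triple algebra: let d be any nonzero real number. On V = ℝ² with standard basis u = (1,0), v = (0,1), let · and * be the unique bilinear skew-symmetric operations with u*v = d·v and u·v = u, and let ⟨;,⟩ be the unique trilinear operation skew-symmetric in its last two arguments with ⟨u;u,v⟩ = 0 and ⟨v;u,v⟩ = −u. Then (V, ·, *, ⟨;,⟩) satisfies all the hyporeductive triple algebra identities (2)–(13), and both binary operations · and * are not identically zero. -/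
/-- Existence of a nontrivial 2-dimensional real hyporeductive triple algebra:
on ℝ² with u = (1,0), v = (0,1), the operations determined by u*v = d•v,
u·v = u, ⟨u;u,v⟩ = 0, ⟨v;u,v⟩ = −u (d ≠ 0) satisfy the h.t.a. identities
(2)–(13), and both binary operations are not identically zero. -/
theorem exists_nontrivial_two_dim_hta (d : ℝ) (hd : d ≠ 0)
    (A : TripleAlg (ℝ × ℝ))
    (hstar : A.star ((1 : ℝ), (0 : ℝ)) ((0 : ℝ), (1 : ℝ)) = d • ((0 : ℝ), (1 : ℝ)))
    (hmul : A.mul ((1 : ℝ), (0 : ℝ)) ((0 : ℝ), (1 : ℝ)) = ((1 : ℝ), (0 : ℝ)))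
    (htu : A.tri ((1 : ℝ), (0 : ℝ)) ((1 : ℝ), (0 : ℝ)) ((0 : ℝ), (1 : ℝ)) = 0)
    (htv : A.tri ((0 : ℝ), (1 : ℝ)) ((1 : ℝ), (0 : ℝ)) ((0 : ℝ), (1 : ℝ))
      = -((1 : ℝ), (0 : ℝ))) :
    A.IsHTA ∧ (∃ x y : ℝ × ℝ, A.mul x y ≠ 0) ∧ (∃ x y : ℝ × ℝ, A.star x y ≠ 0) := by
  set u : ℝ × ℝ := ((1 : ℝ), (0 : ℝ)) with hu
  set v : ℝ × ℝ := ((0 : ℝ), (1 : ℝ)) with hv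
  have half : ∀ w : ℝ × ℝ, w = -w → w = 0 := by
    intro w h
    have h2 : (2 : ℝ) • w = 0 := by rw [two_smul]; nth_rewrite 2 [h]; simp
    simpa using (smul_eq_zero.mp h2).resolve_left (by norm_num)
  have mul_self : ∀ x, A.mul x x = 0 := fun x => half _ (A.mul_skew x x)
  have star_self : ∀ x, A.star x x = 0 := fun x => half _ (A.star_skew x x)
  have tri_self : ∀ x y, A.tri x y y = 0 := fun x y => half _ (A.tri_skew x y y)
  have mulvu : A.mul v u = -u := by rw [A.mul_skew, hmul]
  have starvu : A.star v u = -(d • v) := by rw [A.star_skew, hstar]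
  have mulr_add : ∀ x y z, A.mul x (y + z) = A.mul x y + A.mul x z := by
    intro x y z
    rw [A.mul_skew x (y + z), A.mul_add_left, A.mul_skew y x, A.mul_skew z x]; abel
  have mulr_smul : ∀ (r : ℝ) x y, A.mul x (r • y) = r • A.mul x y := by
    intro r x y
    rw [A.mul_skew x (r • y), A.mul_smul_left, A.mul_skew y x]; simp
  have starr_add : ∀ x y z, A.star x (y + z) = A.star x y + A.star x z := by
    intro x y z
    rw [A.star_skew x (y + z), A.star_add_left, A.star_skew y x, A.star_skew z x]; abel
  have starr_smul : ∀ (r : ℝ) x y, A.star x (r • y) = r • A.star x y := by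
    intro r x y
    rw [A.star_skew x (r • y), A.star_smul_left, A.star_skew y x]; simp
  have trir_add : ∀ x y z w, A.tri x y (z + w) = A.tri x y z + A.tri x y w := by
    intro x y z w
    rw [A.tri_skew x y (z + w), A.tri_add_snd, A.tri_skew x z y, A.tri_skew x w y]; abel
  have trir_smul : ∀ (r : ℝ) x y z, A.tri x y (r • z) = r • A.tri x y z := by
    intro r x y z
    rw [A.tri_skew x y (r • z), A.tri_smul_snd, A.tri_skew x z y]; simp
  have hdec : ∀ x : ℝ × ℝ, x = x.1 • u + x.2 • v := by
    intro x; simp [hu, hv, Prod.ext_iff]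
  have hm : ∀ x y : ℝ × ℝ, A.mul x y = (x.1 * y.2 - x.2 * y.1) • u := by
    intro x y
    conv_lhs => rw [hdec x, hdec y]
    simp only [A.mul_add_left, mulr_add, A.mul_smul_left, mulr_smul, hmul, mulvu,
      mul_self, smul_zero, smul_neg, smul_smul]
    module
  have hs : ∀ x y : ℝ × ℝ, A.star x y = (d * (x.1 * y.2 - x.2 * y.1)) • v := by
    intro x y
    conv_lhs => rw [hdec x, hdec y]
    simp only [A.star_add_left, starr_add, A.star_smul_left, starr_smul, hstar, starvu,
      star_self, smul_zero, smul_neg, smul_smul]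
    module
  have triuu : A.tri u u v = 0 := htu
  have trivuv : A.tri v u v = -u := htv
  have ht : ∀ x y z : ℝ × ℝ, A.tri x y z = (-(x.2 * (y.1 * z.2 - y.2 * z.1))) • u := by
    intro x y z
    conv_lhs => rw [hdec x, hdec y, hdec z]
    have trivvu : A.tri v v u = u := by rw [A.tri_skew, trivuv]; simp
    have triuvu : A.tri u v u = 0 := by rw [A.tri_skew, triuu]; simp
    simp only [A.tri_add_fst, A.tri_smul_fst, A.tri_add_snd, A.tri_smul_snd, trir_add,
      trir_smul, triuu, trivuv, trivvu, triuvu, tri_self, smul_zero, smul_neg, smul_smul,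
      smul_add]
    module
  refine ⟨?_, ⟨u, v, ?_⟩, ⟨u, v, ?_⟩⟩
  · rw [TripleAlg.IsHTA]
    refine ⟨?_, ?_, ?_, ?_, ?_, ?_, ?_, ?_, ?_, ?_, ?_, ?_⟩ <;>
      · intros
        simp only [TripleAlg.term11, TripleAlg.term12, TripleAlg.term13, hm, hs, ht]
        simp only [hu, hv, Prod.smul_mk, Prod.mk_add_mk, Prod.mk_sub_mk, Prod.neg_mk,
          Prod.fst_add, Prod.snd_add, Prod.fst_sub, Prod.snd_sub, Prod.fst_neg, Prod.snd_neg,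
          Prod.smul_fst, Prod.smul_snd, smul_eq_mul]
        rw [Prod.ext_iff]
        constructor <;> (try norm_num) <;> (try ring) <;> (try tauto)
  · rw [hmul, hu]; simp [Prod.ext_iff]
  · rw [hstar, hv]; simp [Prod.ext_iff, hd]
end

section
/- Equation (20): Let (V, ·, *, ⟨;,⟩) be a 2-dimensional real hyporeductive triple algebra, let u, v be a basis of V, and write in coordinates u·v = a·u + b·v, ⟨u;u,v⟩ = e·u + f·v, ⟨v;u,v⟩ = k·u + l·v with real numbers a, b, e, f, k, l. Then b·k − a·l = 0 and a·f − b·e = 0. -/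
/-- Equation (20): in a 2-dimensional real h.t.a. with basis u, v and
u·v = a•u + b•v, ⟨u;u,v⟩ = e•u + f•v, ⟨v;u,v⟩ = k•u + l•v, one has
b·k − a·l = 0 and a·f − b·e = 0. -/
theorem equation_20 {V : Type*} [AddCommGroup V] [Module ℝ V]
    (hdim : Module.finrank ℝ V = 2) (A : TripleAlg V) (hA : A.IsHTA)
    (B : Module.Basis (Fin 2) ℝ V) (a b e f k l : ℝ)
    (hmul : A.mul (B 0) (B 1) = a • B 0 + b • B 1)
    (htu : A.tri (B 0) (B 0) (B 1) = e • B 0 + f • B 1)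
    (htv : A.tri (B 1) (B 0) (B 1) = k • B 0 + l • B 1) :
    b * k - a * l = 0 ∧ a * f - b * e = 0 := by
  -- auxiliary facts
  have mul_smul_right : ∀ (r : ℝ) (x y : V), A.mul x (r • y) = r • A.mul x y := by
    intro r x y
    rw [A.mul_skew, A.mul_smul_left, A.mul_skew y x]
    simp
  have mul_add_right : ∀ x y z : V, A.mul x (y + z) = A.mul x y + A.mul x z := by
    intro x y z
    rw [A.mul_skew, A.mul_add_left, A.mul_skew y x, A.mul_skew z x]
    abel
  have mul_self : ∀ x : V, A.mul x x = 0 := by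
    intro x
    have h := A.mul_skew x x
    have h2 : (2 : ℝ) • A.mul x x = 0 := by
      rw [two_smul]; nth_rewrite 2 [h]; exact add_neg_cancel _
    simpa using (smul_eq_zero.mp h2).resolve_left (by norm_num)
  have h9 := hA.2.2.2.2.2.2.2.1 (B 0) (B 1) (B 0) (B 1)
  rw [hmul, htu, htv] at h9
  rw [show A.mul (B 1) (e • B 0 + f • B 1)
        = e • A.mul (B 1) (B 0) + f • A.mul (B 1) (B 1) by
      rw [mul_add_right, mul_smul_right, mul_smul_right],
    show A.mul (B 0) (k • B 0 + l • B 1)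
        = k • A.mul (B 0) (B 0) + l • A.mul (B 0) (B 1) by
      rw [mul_add_right, mul_smul_right, mul_smul_right],
    show A.tri (a • B 0 + b • B 1) (B 0) (B 1)
        = a • A.tri (B 0) (B 0) (B 1) + b • A.tri (B 1) (B 0) (B 1) by
      rw [A.tri_add_fst, A.tri_smul_fst, A.tri_smul_fst],
    mul_self, mul_self, A.mul_skew (B 1) (B 0), hmul, htu, htv] at h9
  have key : (2 * (b * k - a * l)) • B 0 + (2 * (a * f - b * e)) • B 1 = (0 : V) := by
    rw [← h9]; module
  have h0 := congrArg (fun x => B.repr x 0) key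
  have h1 := congrArg (fun x => B.repr x 1) key
  simp [B.repr_self, Finsupp.single_apply] at h0 h1
  constructor <;> linarith
end

section
/- Equation (21): Let (V, ·, *, ⟨;,⟩) be a 2-dimensional real hyporeductive triple algebra, let u, v be a basis of V, and write ⟨u;u,v⟩ = e·u + f·v and ⟨v;u,v⟩ = k·u + l·v with real numbers e, f, k, l. Then (e + l)·(u*v) = 0. -/
/-- Equation (21): in a 2-dimensional real h.t.a. with basis u, v and
⟨u;u,v⟩ = e•u + f•v, ⟨v;u,v⟩ = k•u + l•v, one has (e + l) • (u*v) = 0. -/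
theorem equation_21 {V : Type*} [AddCommGroup V] [Module ℝ V]
    (hdim : Module.finrank ℝ V = 2) (A : TripleAlg V) (hA : A.IsHTA)
    (B : Module.Basis (Fin 2) ℝ V) (e f k l : ℝ)
    (htu : A.tri (B 0) (B 0) (B 1) = e • B 0 + f • B 1)
    (htv : A.tri (B 1) (B 0) (B 1) = k • B 0 + l • B 1) :
    (e + l) • A.star (B 0) (B 1) = 0 := by
  set u := B 0
  set v := B 1
  -- basic lemmas about star
  have star_self : ∀ x : V, A.star x x = 0 := by
    intro x
    have h := A.star_skew x x
    have h2 : A.star x x + A.star x x = 0 := by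
      nth_rewrite 1 [h]; abel
    have h3 : (2 : ℝ) • A.star x x = 0 := by
      rw [two_smul]; exact h2
    have := congrArg (fun z => (2 : ℝ)⁻¹ • z) h3
    simpa [smul_smul] using this
  have star_add_right : ∀ x a b : V, A.star x (a + b) = A.star x a + A.star x b := by
    intro x a b
    rw [A.star_skew x (a + b), A.star_add_left, A.star_skew a x, A.star_skew b x]
    abel
  have star_smul_right : ∀ (r : ℝ) (x a : V), A.star x (r • a) = r • A.star x a := by
    intro r x a
    rw [A.star_skew x (r • a), A.star_smul_left, A.star_skew a x, smul_neg, neg_neg]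
  -- identity (10) with ξ=ζ=u, η=κ=v
  have h10 := hA.2.2.2.2.2.2.2.2.1 u v u v
  rw [htu, htv] at h10
  rw [star_add_right, star_add_right, star_smul_right, star_smul_right,
      star_smul_right, star_smul_right, star_self, star_self,
      A.star_skew v u] at h10
  have h2 : (2 : ℝ) • ((e + l) • A.star u v) = 0 := by
    rw [smul_smul]
    have : (2 * (e + l)) • A.star u v =
        (k • (0:V) + l • A.star u v - (e • -A.star u v + f • 0))
          + (k • (0:V) + l • A.star u v - (e • -A.star u v + f • 0)) := by
      simp [smul_neg, add_smul]
      module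
    rw [this]
    convert h10 using 1
    abel
  have := congrArg (fun z => (2 : ℝ)⁻¹ • z) h2
  simpa [smul_smul] using this
end

section
/- Isomorphism of types (A8) and (A11): Let a, c, d, k be real numbers. Let V = ℝ² with standard basis u = (1,0), v = (0,1). Let A be the triple algebra on V whose bilinear skew-symmetric operations and trilinear operation (skew-symmetric in the last two arguments) are determined by u*v = c·u + d·v, u·v = a·u, ⟨u;u,v⟩ = 0, ⟨v;u,v⟩ = k·u, and let B be the triple algebra on V determined by u*'v = (−d)·u + (−c)·v, u·'v = (−a)·v, ⟨u;u,v⟩' = (−k)·v, ⟨v;u,v⟩' = 0. Then the linear map φ : V → V with φ(u) = v, φ(v) = u is an isomorphism from A to B, i.e. φ is a linear bijection with φ(x·y) = φ(x)·'φ(y), φ(x*y) = φ(x)*'φ(y) and φ(⟨x;y,z⟩) = ⟨φ(x);φ(y),φ(z)⟩' for all x, y, z ∈ V. -/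
section Aux

variable (T : TripleAlg (ℝ × ℝ))

private lemma aux_decomp (w : ℝ × ℝ) :
    w = w.1 • ((1 : ℝ), (0 : ℝ)) + w.2 • ((0 : ℝ), (1 : ℝ)) := by
  ext <;> simp

private lemma aux_mul_self (w : ℝ × ℝ) : T.mul w w = 0 := by
  have h := T.mul_skew w w
  have h2 : T.mul w w + T.mul w w = 0 := by nth_rewrite 1 [h]; abel
  have h3 : (2 : ℝ) • T.mul w w = 0 := by rw [two_smul]; exact h2
  simpa using h3

private lemma aux_star_self (w : ℝ × ℝ) : T.star w w = 0 := by
  have h := T.star_skew w w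
  have h2 : T.star w w + T.star w w = 0 := by nth_rewrite 1 [h]; abel
  have h3 : (2 : ℝ) • T.star w w = 0 := by rw [two_smul]; exact h2
  simpa using h3

private lemma aux_tri_self (x w : ℝ × ℝ) : T.tri x w w = 0 := by
  have h := T.tri_skew x w w
  have h2 : T.tri x w w + T.tri x w w = 0 := by nth_rewrite 1 [h]; abel
  have h3 : (2 : ℝ) • T.tri x w w = 0 := by rw [two_smul]; exact h2
  simpa using h3

private lemma aux_mul_add_right (x y z : ℝ × ℝ) :
    T.mul x (y + z) = T.mul x y + T.mul x z := by
  rw [T.mul_skew x (y + z), T.mul_add_left, T.mul_skew y x, T.mul_skew z x]; abel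

private lemma aux_mul_smul_right (r : ℝ) (x y : ℝ × ℝ) :
    T.mul x (r • y) = r • T.mul x y := by
  rw [T.mul_skew x (r • y), T.mul_smul_left, T.mul_skew y x]; simp

private lemma aux_star_add_right (x y z : ℝ × ℝ) :
    T.star x (y + z) = T.star x y + T.star x z := by
  rw [T.star_skew x (y + z), T.star_add_left, T.star_skew y x, T.star_skew z x]; abel

private lemma aux_star_smul_right (r : ℝ) (x y : ℝ × ℝ) :
    T.star x (r • y) = r • T.star x y := by
  rw [T.star_skew x (r • y), T.star_smul_left, T.star_skew y x]; simp

private lemma aux_tri_add_thd (x y z w : ℝ × ℝ) :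
    T.tri x y (z + w) = T.tri x y z + T.tri x y w := by
  rw [T.tri_skew x y (z + w), T.tri_add_snd, T.tri_skew x z y, T.tri_skew x w y]; abel

private lemma aux_tri_smul_thd (r : ℝ) (x y z : ℝ × ℝ) :
    T.tri x y (r • z) = r • T.tri x y z := by
  rw [T.tri_skew x y (r • z), T.tri_smul_snd, T.tri_skew x z y]; simp

private lemma aux_mul_eq (x y : ℝ × ℝ) :
    T.mul x y = (x.1 * y.2 - x.2 * y.1) • T.mul ((1 : ℝ), (0 : ℝ)) ((0 : ℝ), (1 : ℝ)) := by
  conv_lhs => rw [aux_decomp x, aux_decomp y]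
  rw [T.mul_add_left, T.mul_smul_left, T.mul_smul_left, aux_mul_add_right,
    aux_mul_add_right, aux_mul_smul_right, aux_mul_smul_right, aux_mul_smul_right,
    aux_mul_smul_right, aux_mul_self, aux_mul_self,
    T.mul_skew ((0 : ℝ), (1 : ℝ)) ((1 : ℝ), (0 : ℝ))]
  module

private lemma aux_star_eq (x y : ℝ × ℝ) :
    T.star x y = (x.1 * y.2 - x.2 * y.1) • T.star ((1 : ℝ), (0 : ℝ)) ((0 : ℝ), (1 : ℝ)) := by
  conv_lhs => rw [aux_decomp x, aux_decomp y]
  rw [T.star_add_left, T.star_smul_left, T.star_smul_left, aux_star_add_right,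
    aux_star_add_right, aux_star_smul_right, aux_star_smul_right, aux_star_smul_right,
    aux_star_smul_right, aux_star_self, aux_star_self,
    T.star_skew ((0 : ℝ), (1 : ℝ)) ((1 : ℝ), (0 : ℝ))]
  module

private lemma aux_tri_eq (x y z : ℝ × ℝ) :
    T.tri x y z = (y.1 * z.2 - y.2 * z.1) •
      (x.1 • T.tri ((1 : ℝ), (0 : ℝ)) ((1 : ℝ), (0 : ℝ)) ((0 : ℝ), (1 : ℝ))
        + x.2 • T.tri ((0 : ℝ), (1 : ℝ)) ((1 : ℝ), (0 : ℝ)) ((0 : ℝ), (1 : ℝ))) := by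
  have key : ∀ w : ℝ × ℝ, T.tri w y z = (y.1 * z.2 - y.2 * z.1) •
      T.tri w ((1 : ℝ), (0 : ℝ)) ((0 : ℝ), (1 : ℝ)) := by
    intro w
    conv_lhs => rw [aux_decomp y, aux_decomp z]
    rw [T.tri_add_snd, T.tri_smul_snd, T.tri_smul_snd, aux_tri_add_thd,
      aux_tri_add_thd, aux_tri_smul_thd, aux_tri_smul_thd, aux_tri_smul_thd,
      aux_tri_smul_thd, aux_tri_self, aux_tri_self,
      T.tri_skew w ((0 : ℝ), (1 : ℝ)) ((1 : ℝ), (0 : ℝ))]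
    module
  conv_lhs => rw [aux_decomp x]
  rw [T.tri_add_fst, T.tri_smul_fst, T.tri_smul_fst, key, key]
  module

end Aux

/-- Isomorphism of types (A8) and (A11): on ℝ² with u = (1,0), v = (0,1),
the triple algebra A determined by u*v = c•u + d•v, u·v = a•u, ⟨u;u,v⟩ = 0,
⟨v;u,v⟩ = k•u is isomorphic to the triple algebra B determined by
u*'v = (−d)•u + (−c)•v, u·'v = (−a)•v, ⟨u;u,v⟩' = (−k)•v, ⟨v;u,v⟩' = 0,
via the linear map φ with φ(u) = v, φ(v) = u. -/
theorem typeA8_iso_typeA11 (a c d k : ℝ) (A B : TripleAlg (ℝ × ℝ))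
    (hAstar : A.star ((1 : ℝ), (0 : ℝ)) ((0 : ℝ), (1 : ℝ))
      = c • ((1 : ℝ), (0 : ℝ)) + d • ((0 : ℝ), (1 : ℝ)))
    (hAmul : A.mul ((1 : ℝ), (0 : ℝ)) ((0 : ℝ), (1 : ℝ)) = a • ((1 : ℝ), (0 : ℝ)))
    (hAtu : A.tri ((1 : ℝ), (0 : ℝ)) ((1 : ℝ), (0 : ℝ)) ((0 : ℝ), (1 : ℝ)) = 0)
    (hAtv : A.tri ((0 : ℝ), (1 : ℝ)) ((1 : ℝ), (0 : ℝ)) ((0 : ℝ), (1 : ℝ))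
      = k • ((1 : ℝ), (0 : ℝ)))
    (hBstar : B.star ((1 : ℝ), (0 : ℝ)) ((0 : ℝ), (1 : ℝ))
      = (-d) • ((1 : ℝ), (0 : ℝ)) + (-c) • ((0 : ℝ), (1 : ℝ)))
    (hBmul : B.mul ((1 : ℝ), (0 : ℝ)) ((0 : ℝ), (1 : ℝ)) = (-a) • ((0 : ℝ), (1 : ℝ)))
    (hBtu : B.tri ((1 : ℝ), (0 : ℝ)) ((1 : ℝ), (0 : ℝ)) ((0 : ℝ), (1 : ℝ))
      = (-k) • ((0 : ℝ), (1 : ℝ)))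
    (hBtv : B.tri ((0 : ℝ), (1 : ℝ)) ((1 : ℝ), (0 : ℝ)) ((0 : ℝ), (1 : ℝ)) = 0)
    (φ : (ℝ × ℝ) →ₗ[ℝ] (ℝ × ℝ))
    (hφu : φ ((1 : ℝ), (0 : ℝ)) = ((0 : ℝ), (1 : ℝ)))
    (hφv : φ ((0 : ℝ), (1 : ℝ)) = ((1 : ℝ), (0 : ℝ))) :
    Function.Bijective φ ∧
    (∀ x y : ℝ × ℝ, φ (A.mul x y) = B.mul (φ x) (φ y)) ∧
    (∀ x y : ℝ × ℝ, φ (A.star x y) = B.star (φ x) (φ y)) ∧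
    (∀ x y z : ℝ × ℝ, φ (A.tri x y z) = B.tri (φ x) (φ y) (φ z)) := by
  have hφ : ∀ w : ℝ × ℝ, φ w = (w.2, w.1) := by
    intro w
    conv_lhs => rw [aux_decomp w]
    rw [map_add, map_smul, map_smul, hφu, hφv]
    ext <;> simp
  have hinv : ∀ w : ℝ × ℝ, φ (φ w) = w := by
    intro w; rw [hφ, hφ]
  refine ⟨⟨Function.LeftInverse.injective hinv, Function.RightInverse.surjective hinv⟩,
    ?_, ?_, ?_⟩
  · intro x y
    rw [aux_mul_eq A, aux_mul_eq B, hAmul, hBmul, map_smul, map_smul, hφu, hφ x, hφ y]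
    ext <;> simp <;> ring
  · intro x y
    rw [aux_star_eq A, aux_star_eq B, hAstar, hBstar, map_smul, hφ x, hφ y]
    rw [map_add, map_smul, map_smul, hφu, hφv]
    ext <;> simp <;> ring
  · intro x y z
    rw [aux_tri_eq A, aux_tri_eq B, hAtu, hAtv, hBtu, hBtv, map_smul, map_add,
      map_smul, map_smul, map_smul, hφu, hφ x, hφ y, hφ z]
    ext <;> simp <;> ring
end

section
/- Corollary 2 (classification of 2-dimensional real Lie triple algebras): Let (V, ·, ⟨;,⟩) be a 2-dimensional real Lie triple algebra. Then there exists a basis u, v of V such that the operations take one of the following forms on the basis (the operations being determined by the values u·v, ⟨u;u,v⟩, ⟨v;u,v⟩): (T1) u·v = 0, ⟨u;u,v⟩ = α·u + β·v, ⟨v;u,v⟩ = γ·u − α·v for some reals α, β, γ; (T2) u·v = u, ⟨u;u,v⟩ = 0, ⟨v;u,v⟩ = k·u for some real k; (T3) u·v = u + v, ⟨u;u,v⟩ = 0, ⟨v;u,v⟩ = 0; (T4) u·v = a·u + b·v, ⟨u;u,v⟩ = e·u + f·v, ⟨v;u,v⟩ = k·u − e·v for some reals a, b, e, f, k with a ≠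 0, b ≠ 0, e ≠ 0, f ≠ 0, k ≠ 0, a·f − b·e = 0 = b·k + a·e. -/
/-- A binary-ternary algebra: a real vector space with a bilinear
skew-symmetric binary operation `mul` (x·y) and a trilinear operation `tri`
(⟨x;y,z⟩) skew-symmetric in its last two arguments. -/
structure BinTriAlg (V : Type*) [AddCommGroup V] [Module ℝ V] where
  mul : V → V → V
  tri : V → V → V → V
  mul_add_left : ∀ x y z : V, mul (x + y) z = mul x z + mul y z
  mul_smul_left : ∀ (r : ℝ) (x y : V), mul (r • x) y = r • mul x y
  mul_skew : ∀ x y : V, mul x y = -mul y x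
  tri_add_fst : ∀ x y z w : V, tri (x + y) z w = tri x z w + tri y z w
  tri_smul_fst : ∀ (r : ℝ) (x z w : V), tri (r • x) z w = r • tri x z w
  tri_add_snd : ∀ x y z w : V, tri x (y + z) w = tri x y w + tri x z w
  tri_smul_snd : ∀ (r : ℝ) (x y w : V), tri x (r • y) w = r • tri x y w
  tri_skew : ∀ x y z : V, tri x y z = -tri x z y

namespace BinTriAlg

variable {V : Type*} [AddCommGroup V] [Module ℝ V]

/-- The defining identities of a Lie triple algebra (generalized Lie triple
system). -/
def IsLieTripleAlg (A : BinTriAlg V) : Prop :=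
  (∀ ξ η ζ : V,
    A.mul ξ (A.mul η ζ) - A.tri ξ η ζ + A.mul η (A.mul ζ ξ) - A.tri η ζ ξ
      + A.mul ζ (A.mul ξ η) - A.tri ζ ξ η = 0) ∧
  (∀ θ ξ η ζ : V,
    A.tri θ ζ (A.mul ξ η) + A.tri θ ξ (A.mul η ζ) + A.tri θ η (A.mul ζ ξ) = 0) ∧
  (∀ ξ η ζ κ : V,
    A.mul κ (A.tri ζ ξ η) - A.mul ζ (A.tri κ ξ η) + A.tri (A.mul ζ κ) ξ η = 0) ∧
  (∀ ξ η ζ κ χ : V,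
    A.tri (A.tri χ ξ η) ζ κ - A.tri (A.tri χ ζ κ) ξ η
      + A.tri χ ζ (A.tri κ ξ η) - A.tri χ κ (A.tri ζ ξ η) = 0)

end BinTriAlg

namespace BinTriAlg

variable {V : Type*} [AddCommGroup V] [Module ℝ V] (A : BinTriAlg V)

lemma mul_self_eq (x : V) : A.mul x x = 0 := by
  have h2 : (2 : ℝ) • A.mul x x = 0 := by
    rw [two_smul]; nth_rewrite 2 [A.mul_skew]; exact add_neg_cancel _
  rcases smul_eq_zero.mp h2 with h | h
  · norm_num at h
  · exact h

lemma tri_self_eq (x y : V) : A.tri x y y = 0 := by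
  have h2 : (2 : ℝ) • A.tri x y y = 0 := by
    rw [two_smul]; nth_rewrite 2 [A.tri_skew]; exact add_neg_cancel _
  rcases smul_eq_zero.mp h2 with h | h
  · norm_num at h
  · exact h

lemma mul_add_right' (x y z : V) : A.mul x (y + z) = A.mul x y + A.mul x z := by
  rw [A.mul_skew x (y + z), A.mul_add_left, A.mul_skew y x, A.mul_skew z x]
  abel

lemma mul_smul_right' (r : ℝ) (x y : V) : A.mul x (r • y) = r • A.mul x y := by
  rw [A.mul_skew x (r • y), A.mul_smul_left, A.mul_skew y x]
  simp

lemma mul_comb (x u v : V) (a b : ℝ) :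
    A.mul x (a • u + b • v) = a • A.mul x u + b • A.mul x v := by
  rw [A.mul_add_right', A.mul_smul_right', A.mul_smul_right']

lemma tri_add_thd (x y z w : V) : A.tri x y (z + w) = A.tri x y z + A.tri x y w := by
  rw [A.tri_skew x y (z + w), A.tri_add_snd, A.tri_skew x z y, A.tri_skew x w y]
  abel

lemma tri_smul_thd (r : ℝ) (x y z : V) : A.tri x y (r • z) = r • A.tri x y z := by
  rw [A.tri_skew x y (r • z), A.tri_smul_snd, A.tri_skew x z y]
  simp

lemma tri_comb3 (x y u v : V) (a b : ℝ) :
    A.tri x y (a • u + b • v) = a • A.tri x y u + b • A.tri x y v := by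
  rw [A.tri_add_thd, A.tri_smul_thd, A.tri_smul_thd]

lemma pair_zero (B : Module.Basis (Fin 2) ℝ V) {c d : ℝ} (h : c • B 0 + d • B 1 = 0) :
    c = 0 ∧ d = 0 := by
  have H := Fintype.linearIndependent_iff.mp B.linearIndependent ![c, d]
    (by simpa [Fin.sum_univ_two] using h)
  exact ⟨H 0, H 1⟩

lemma repr_two (B : Module.Basis (Fin 2) ℝ V) (x : V) :
    x = (B.repr x 0) • B 0 + (B.repr x 1) • B 1 := by
  have := B.sum_repr x
  rw [Fin.sum_univ_two] at this
  exact this.symm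

/-- The abelian case: (T1). -/
lemma t1_of_basis (hA : A.IsLieTripleAlg) (B : Module.Basis (Fin 2) ℝ V)
    (h : A.mul (B 0) (B 1) = 0) :
    ∃ α β γ : ℝ, A.tri (B 0) (B 0) (B 1) = α • B 0 + β • B 1 ∧
      A.tri (B 1) (B 0) (B 1) = γ • B 0 - α • B 1 := by
  obtain ⟨-, -, -, h4⟩ := hA
  set u := B 0 with hu
  set v := B 1 with hv
  set α := B.repr (A.tri u u v) 0 with hα
  set β := B.repr (A.tri u u v) 1 with hβ
  set γ := B.repr (A.tri v u v) 0 with hγ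
  set δ := B.repr (A.tri v u v) 1 with hδ
  have h1 : A.tri u u v = α • u + β • v := repr_two B _
  have h2 : A.tri v u v = γ • u + δ • v := repr_two B _
  -- identity 4 with χ = u
  have tu3 : A.tri u u (A.tri v u v) = (δ * α) • u + (δ * β) • v := by
    rw [h2, A.tri_comb3, A.tri_self_eq, h1]; module
  have tu4 : A.tri u v (A.tri u u v) = (-(α * α)) • u + (-(α * β)) • v := by
    rw [h1, A.tri_comb3, A.tri_self_eq, A.tri_skew u v u, h1]; module
  have Eu := h4 u v u v u
  rw [tu3, tu4] at Eu
  have Eu' : ((δ + α) * α) • u + ((δ + α) * β) • v = 0 := by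
    calc ((δ + α) * α) • u + ((δ + α) * β) • v
        = A.tri (A.tri u u v) u v - A.tri (A.tri u u v) u v +
            ((δ * α) • u + (δ * β) • v) - ((-(α * α)) • u + (-(α * β)) • v) := by
          module
      _ = 0 := Eu
  have e1 := (pair_zero B Eu').1
  -- identity 4 with χ = v
  have tv3 : A.tri v u (A.tri v u v) = (δ * γ) • u + (δ * δ) • v := by
    rw [h2, A.tri_comb3, A.tri_self_eq, h2]; module
  have tv4 : A.tri v v (A.tri u u v) = (-(α * γ)) • u + (-(α * δ)) • v := by
    rw [h1, A.tri_comb3, A.tri_self_eq, A.tri_skew v v u, h2]; module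
  have Ev := h4 u v u v v
  rw [tv3, tv4] at Ev
  have Ev' : ((δ + α) * γ) • u + ((δ + α) * δ) • v = 0 := by
    calc ((δ + α) * γ) • u + ((δ + α) * δ) • v
        = A.tri (A.tri v u v) u v - A.tri (A.tri v u v) u v +
            ((δ * γ) • u + (δ * δ) • v) - ((-(α * γ)) • u + (-(α * δ)) • v) := by
          module
      _ = 0 := Ev
  have e2 := (pair_zero B Ev').2
  have hda : δ + α = 0 := by
    have : (δ + α) * (δ + α) = 0 := by linear_combination e1 + e2
    exact mul_self_eq_zero.mp this
  have hd : δ = -α := by linarith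
  exact ⟨α, β, γ, h1, by rw [h2, hd]; module⟩

/-- The nonabelian case: a basis with u·v = u gives (T2). -/
lemma t2_of_basis (hA : A.IsLieTripleAlg) (B : Module.Basis (Fin 2) ℝ V)
    (h : A.mul (B 0) (B 1) = B 0) :
    ∃ k : ℝ, A.tri (B 0) (B 0) (B 1) = 0 ∧ A.tri (B 1) (B 0) (B 1) = k • B 0 := by
  obtain ⟨-, -, h3, h4⟩ := hA
  set u := B 0 with hu
  set v := B 1 with hv
  set e := B.repr (A.tri u u v) 0 with he
  set f := B.repr (A.tri u u v) 1 with hf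
  set k := B.repr (A.tri v u v) 0 with hk
  set l := B.repr (A.tri v u v) 1 with hl
  have h1 : A.tri u u v = e • u + f • v := repr_two B _
  have h2 : A.tri v u v = k • u + l • v := repr_two B _
  -- identity 3
  have tA : A.mul v (A.tri u u v) = (-e) • u := by
    rw [h1, A.mul_comb, A.mul_self_eq, A.mul_skew v u, h]; module
  have tB : A.mul u (A.tri v u v) = l • u := by
    rw [h2, A.mul_comb, A.mul_self_eq, h]; module
  have tC : A.tri (A.mul u v) u v = e • u + f • v := by rw [h]; exact h1
  have E3 := h3 u v u v
  rw [tA, tB, tC] at E3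
  have E3' : (-l) • u + f • v = 0 := by
    calc (-l) • u + f • v
        = (-e) • u - l • u + (e • u + f • v) := by module
      _ = 0 := E3
  obtain ⟨hl0, hf0⟩ := pair_zero B E3'
  have hl0 : l = 0 := by linarith
  -- identity 4 with χ = u
  have t3 : A.tri u u (A.tri v u v) = (l * e) • u + (l * f) • v := by
    rw [h2, A.tri_comb3, A.tri_self_eq, h1]; module
  have t4 : A.tri u v (A.tri u u v) = (-(e * e)) • u + (-(e * f)) • v := by
    rw [h1, A.tri_comb3, A.tri_self_eq, A.tri_skew u v u, h1]; module
  have E4 := h4 u v u v u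
  rw [t3, t4] at E4
  have E4' : ((l + e) * e) • u + ((l + e) * f) • v = 0 := by
    calc ((l + e) * e) • u + ((l + e) * f) • v
        = A.tri (A.tri u u v) u v - A.tri (A.tri u u v) u v +
            ((l * e) • u + (l * f) • v) - ((-(e * e)) • u + (-(e * f)) • v) := by
          module
      _ = 0 := E4
  have he0 : e = 0 := by
    have := (pair_zero B E4').1
    rw [hl0] at this
    simpa using mul_self_eq_zero.mp (by linarith)
  refine ⟨k, ?_, ?_⟩
  · rw [h1, he0, hf0]; module
  · rw [h2, hl0]; module

end BinTriAlg

/-- Corollary 2 (first part): classification of 2-dimensional real Lie triple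
algebras into the types (T1)–(T4). -/
theorem classification_two_dim_lie_triple_alg {V : Type*} [AddCommGroup V]
    [Module ℝ V] (hdim : Module.finrank ℝ V = 2) (A : BinTriAlg V)
    (hA : A.IsLieTripleAlg) :
    ∃ B : Module.Basis (Fin 2) ℝ V,
      -- (T1)
      (∃ α β γ : ℝ, A.mul (B 0) (B 1) = 0 ∧
        A.tri (B 0) (B 0) (B 1) = α • B 0 + β • B 1 ∧
        A.tri (B 1) (B 0) (B 1) = γ • B 0 - α • B 1) ∨
      -- (T2)
      (∃ k : ℝ, A.mul (B 0) (B 1) = B 0 ∧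
        A.tri (B 0) (B 0) (B 1) = 0 ∧
        A.tri (B 1) (B 0) (B 1) = k • B 0) ∨
      -- (T3)
      (A.mul (B 0) (B 1) = B 0 + B 1 ∧
        A.tri (B 0) (B 0) (B 1) = 0 ∧ A.tri (B 1) (B 0) (B 1) = 0) ∨
      -- (T4)
      (∃ a b e f k : ℝ, a ≠ 0 ∧ b ≠ 0 ∧ e ≠ 0 ∧ f ≠ 0 ∧ k ≠ 0 ∧
        a * f - b * e = 0 ∧ b * k + a * e = 0 ∧
        A.mul (B 0) (B 1) = a • B 0 + b • B 1 ∧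
        A.tri (B 0) (B 0) (B 1) = e • B 0 + f • B 1 ∧
        A.tri (B 1) (B 0) (B 1) = k • B 0 - e • B 1) := by
  classical
  have hfd : FiniteDimensional ℝ V := FiniteDimensional.of_finrank_eq_succ hdim
  have hcard : Fintype.card (Fin 2) = Module.finrank ℝ V := by simp [hdim]
  obtain ⟨B⟩ : Nonempty (Module.Basis (Fin 2) ℝ V) := ⟨Module.finBasisOfFinrankEq ℝ V hdim⟩
  by_cases hw : A.mul (B 0) (B 1) = 0
  · obtain ⟨α, β, γ, h1, h2⟩ := A.t1_of_basis hA B hw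
    exact ⟨B, Or.inl ⟨α, β, γ, hw, h1, h2⟩⟩
  · set u := B 0 with hu
    set v := B 1 with hv
    set w := A.mul u v with hwdef
    set p := B.repr w 0 with hp
    set q := B.repr w 1 with hq
    have hw2 : w = p • u + q • v := BinTriAlg.repr_two B w
    have key : ∀ (z : V) (c : ℝ), c ≠ 0 → A.mul w z = c • w →
        LinearIndependent ℝ ![w, c⁻¹ • z] →
        ∃ B' : Module.Basis (Fin 2) ℝ V, ∃ k : ℝ, A.mul (B' 0) (B' 1) = B' 0 ∧
          A.tri (B' 0) (B' 0) (B' 1) = 0 ∧ A.tri (B' 1) (B' 0) (B' 1) = k • B' 0 := by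
      intro z c hc hmul hli
      let B' : Module.Basis (Fin 2) ℝ V := basisOfLinearIndependentOfCardEqFinrank hli hcard
      have hB0 : B' 0 = w := by
        simp [B', coe_basisOfLinearIndependentOfCardEqFinrank]
      have hB1 : B' 1 = c⁻¹ • z := by
        simp [B', coe_basisOfLinearIndependentOfCardEqFinrank]
      have hmul' : A.mul (B' 0) (B' 1) = B' 0 := by
        rw [hB0, hB1, A.mul_smul_right', hmul, smul_smul, inv_mul_cancel₀ hc, one_smul]
      obtain ⟨k, hk1, hk2⟩ := A.t2_of_basis hA B' hmul'
      exact ⟨B', k, hmul', hk1, hk2⟩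
    have main : ∃ B' : Module.Basis (Fin 2) ℝ V, ∃ k : ℝ, A.mul (B' 0) (B' 1) = B' 0 ∧
        A.tri (B' 0) (B' 0) (B' 1) = 0 ∧ A.tri (B' 1) (B' 0) (B' 1) = k • B' 0 := by
      by_cases hq0 : q = 0
      · have hp0 : p ≠ 0 := by
          intro h0
          apply hw
          rw [hw2, h0, hq0, zero_smul, zero_smul, add_zero]
        have hmulv : A.mul w v = p • w := by
          conv_lhs => rw [hw2]
          rw [A.mul_add_left, A.mul_smul_left, A.mul_smul_left, A.mul_self_eq,
            ← hwdef]
          module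
        have hli : LinearIndependent ℝ ![w, p⁻¹ • v] := by
          apply Fintype.linearIndependent_iff.mpr
          intro g hg
          have hg' : g 0 • w + g 1 • (p⁻¹ • v) = 0 := by
            simpa [Fin.sum_univ_two] using hg
          have hg2 : (g 0 * p) • u + (g 0 * q + g 1 * p⁻¹) • v = 0 := by
            calc (g 0 * p) • u + (g 0 * q + g 1 * p⁻¹) • v
                = g 0 • (p • u + q • v) + g 1 • (p⁻¹ • v) := by module
              _ = g 0 • w + g 1 • (p⁻¹ • v) := by rw [← hw2]
              _ = 0 := hg'
          obtain ⟨ha, hb⟩ := BinTriAlg.pair_zero B hg2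
          have hg0 : g 0 = 0 := (mul_eq_zero.mp ha).resolve_right hp0
          have hg1 : g 1 = 0 := by
            rw [hg0, zero_mul, zero_add] at hb
            exact (mul_eq_zero.mp hb).resolve_right (inv_ne_zero hp0)
          intro i
          fin_cases i
          · exact hg0
          · exact hg1
        exact key v p hp0 hmulv hli
      · have hmulu : A.mul w u = (-q) • w := by
          conv_lhs => rw [hw2]
          rw [A.mul_add_left, A.mul_smul_left, A.mul_smul_left, A.mul_self_eq,
            A.mul_skew v u, ← hwdef]
          module
        have hli : LinearIndependent ℝ ![w, (-q)⁻¹ • u] := by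
          apply Fintype.linearIndependent_iff.mpr
          intro g hg
          have hg' : g 0 • w + g 1 • ((-q)⁻¹ • u) = 0 := by
            simpa [Fin.sum_univ_two] using hg
          have hg2 : (g 0 * p + g 1 * (-q)⁻¹) • u + (g 0 * q) • v = 0 := by
            calc (g 0 * p + g 1 * (-q)⁻¹) • u + (g 0 * q) • v
                = g 0 • (p • u + q • v) + g 1 • ((-q)⁻¹ • u) := by module
              _ = g 0 • w + g 1 • ((-q)⁻¹ • u) := by rw [← hw2]
              _ = 0 := hg'
          obtain ⟨ha, hb⟩ := BinTriAlg.pair_zero B hg2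
          have hg0 : g 0 = 0 := (mul_eq_zero.mp hb).resolve_right hq0
          have hg1 : g 1 = 0 := by
            rw [hg0, zero_mul, zero_add] at ha
            exact (mul_eq_zero.mp ha).resolve_right
              (inv_ne_zero (neg_ne_zero.mpr hq0))
          intro i
          fin_cases i
          · exact hg0
          · exact hg1
        exact key u (-q) (neg_ne_zero.mpr hq0) hmulu hli
    obtain ⟨B', k, hm, h1, h2⟩ := main
    exact ⟨B', Or.inr (Or.inl ⟨k, hm, h1, h2⟩)⟩
end

section
/- Corollary 2 (classification of 2-dimensional real Bol algebras, normal form): Let (V, *, ⟨;,⟩) be a 2-dimensional real Bol algebra. Then there exist a basis u, v of V and real numbers c, d, e, f, k such that u*v = c·u + d·v, ⟨u;u,v⟩ = e·u + f·v and ⟨v;u,v⟩ = k·u − e·v (the operations being determined by these values since they are multilinear with the stated skew-symmetries). -/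
/-- A binary-ternary algebra: a real vector space with a bilinear
skew-symmetric binary operation `star` (x*y) and a trilinear operation `tri`
(⟨x;y,z⟩) skew-symmetric in its last two arguments. -/
structure StarTriAlg (V : Type*) [AddCommGroup V] [Module ℝ V] where
  star : V → V → V
  tri : V → V → V → V
  star_add_left : ∀ x y z : V, star (x + y) z = star x z + star y z
  star_smul_left : ∀ (r : ℝ) (x y : V), star (r • x) y = r • star x y
  star_skew : ∀ x y : V, star x y = -star y x
  tri_add_fst : ∀ x y z w : V, tri (x + y) z w = tri x z w + tri y z w
  tri_smul_fst : ∀ (r : ℝ) (x z w : V), tri (r • x) z w = r • tri x z w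
  tri_add_snd : ∀ x y z w : V, tri x (y + z) w = tri x y w + tri x z w
  tri_smul_snd : ∀ (r : ℝ) (x y w : V), tri x (r • y) w = r • tri x y w
  tri_skew : ∀ x y z : V, tri x y z = -tri x z y

namespace StarTriAlg

variable {V : Type*} [AddCommGroup V] [Module ℝ V]

/-- The defining identities of a Bol algebra. -/
def IsBol (A : StarTriAlg V) : Prop :=
  (∀ ξ η ζ : V, A.tri ξ η ζ + A.tri η ζ ξ + A.tri ζ ξ η = 0) ∧
  (∀ ξ η ζ κ : V,
    A.tri (A.star ξ η) ζ κ - A.tri (A.star ζ κ) ξ η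
      + A.star ζ (A.tri κ ξ η) - A.star κ (A.tri ζ ξ η)
      + A.star (A.star ξ η) (A.star ζ κ) = 0) ∧
  (∀ ξ η ζ κ χ : V,
    A.tri (A.tri χ ξ η) ζ κ - A.tri (A.tri χ ζ κ) ξ η
      + A.tri χ ζ (A.tri κ ξ η) - A.tri χ κ (A.tri ζ ξ η) = 0)

end StarTriAlg

/-- Corollary 2 (second part, normal form): any 2-dimensional real Bol algebra
has a basis u, v with u*v = c•u + d•v, ⟨u;u,v⟩ = e•u + f•v and
⟨v;u,v⟩ = k•u − e•v for some reals c, d, e, f, k. -/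
theorem two_dim_bol_normal_form {V : Type*} [AddCommGroup V] [Module ℝ V]
    (hdim : Module.finrank ℝ V = 2) (A : StarTriAlg V) (hA : A.IsBol) :
    ∃ (B : Module.Basis (Fin 2) ℝ V) (c d e f k : ℝ),
      A.star (B 0) (B 1) = c • B 0 + d • B 1 ∧
      A.tri (B 0) (B 0) (B 1) = e • B 0 + f • B 1 ∧
      A.tri (B 1) (B 0) (B 1) = k • B 0 - e • B 1 := by

  have hfin : Module.Finite ℝ V := Module.finite_of_finrank_pos (by omega)
  let B := Module.finBasisOfFinrankEq ℝ V hdim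
  set u := B 0 with hu
  set v := B 1 with hv
  have hrep : ∀ w : V, w = B.repr w 0 • u + B.repr w 1 • v := by
    intro w
    have h := B.sum_repr w
    rw [Fin.sum_univ_two] at h
    exact h.symm
  obtain ⟨H1, H2, H3⟩ := hA
  -- linearity of tri in the third argument
  have tri3_smul : ∀ (r : ℝ) (x y w : V), A.tri x y (r • w) = r • A.tri x y w := by
    intro r x y w
    rw [A.tri_skew x y (r • w), A.tri_smul_snd, A.tri_skew x w y, smul_neg, neg_neg]
  have tri3_add : ∀ (x y a b : V), A.tri x y (a + b) = A.tri x y a + A.tri x y b := by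
    intro x y a b
    rw [A.tri_skew x y (a + b), A.tri_add_snd, A.tri_skew x a y, A.tri_skew x b y]
    abel
  have tri_same : ∀ x y : V, A.tri x y y = 0 := by
    intro x y
    have h := A.tri_skew x y y
    have h2 : A.tri x y y + A.tri x y y = 0 := eq_neg_iff_add_eq_zero.mp h
    have h3 : (2 : ℝ) • A.tri x y y = 0 := by rw [two_smul]; exact h2
    rcases smul_eq_zero.mp h3 with h4 | h4
    · norm_num at h4
    · exact h4
  set e := B.repr (A.tri u u v) 0 with he
  set f := B.repr (A.tri u u v) 1 with hf
  set k := B.repr (A.tri v u v) 0 with hk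
  set g := B.repr (A.tri v u v) 1 with hg
  have huuv : A.tri u u v = e • u + f • v := hrep _
  have hvuv : A.tri v u v = k • u + g • v := hrep _
  have key : ∀ χ : V, (g + e) • A.tri χ u v = 0 := by
    intro χ
    have h := H3 u v u v χ
    rw [sub_self, zero_add] at h
    rw [huuv, hvuv, tri3_add, tri3_add, tri3_smul, tri3_smul, tri3_smul, tri3_smul,
      tri_same χ u, tri_same χ v, A.tri_skew χ v u] at h
    rw [smul_zero, smul_zero, smul_neg, zero_add, add_zero, sub_neg_eq_add] at h
    rw [add_smul]
    exact h
  by_cases hge : g + e = 0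
  · refine ⟨B, B.repr (A.star u v) 0, B.repr (A.star u v) 1, e, f, k, hrep _, huuv, ?_⟩
    have hgE : g = -e := by linarith
    rw [hvuv, hgE, neg_smul, ← sub_eq_add_neg]
  · exfalso
    have h1 : A.tri u u v = 0 := by
      rcases smul_eq_zero.mp (key u) with h | h
      · exact absurd h hge
      · exact h
    have h2 : A.tri v u v = 0 := by
      rcases smul_eq_zero.mp (key v) with h | h
      · exact absurd h hge
      · exact h
    have he0 : e = 0 := by simp [he, h1]
    have hg0 : g = 0 := by simp [hg, h2]
    rw [he0, hg0] at hge
    norm_num at hge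
end

section
/- Classification of 2-dimensional real Lie triple systems (normal form, type (I)): Let (V, ⟨;,⟩) be a 2-dimensional real Lie triple system. Then there exist a basis u, v of V and real numbers e, f, k such that ⟨u;u,v⟩ = e·u + f·v and ⟨v;u,v⟩ = k·u − e·v (the trilinear operation being determined by these values since it is trilinear and skew-symmetric in its last two arguments). -/
/-- A ternary algebra: a real vector space with a trilinear operation `tri`
(⟨x;y,z⟩) skew-symmetric in its last two arguments. -/
structure TriAlg (V : Type*) [AddCommGroup V] [Module ℝ V] where
  tri : V → V → V → V
  tri_add_fst : ∀ x y z w : V, tri (x + y) z w = tri x z w + tri y z w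
  tri_smul_fst : ∀ (r : ℝ) (x z w : V), tri (r • x) z w = r • tri x z w
  tri_add_snd : ∀ x y z w : V, tri x (y + z) w = tri x y w + tri x z w
  tri_smul_snd : ∀ (r : ℝ) (x y w : V), tri x (r • y) w = r • tri x y w
  tri_skew : ∀ x y z : V, tri x y z = -tri x z y

namespace TriAlg

variable {V : Type*} [AddCommGroup V] [Module ℝ V]

/-- The defining identities of a Lie triple system. -/
def IsLTS (A : TriAlg V) : Prop :=
  (∀ ξ η ζ : V, A.tri ξ η ζ + A.tri η ζ ξ + A.tri ζ ξ η = 0) ∧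
  (∀ ξ η ζ κ χ : V,
    A.tri (A.tri χ ξ η) ζ κ - A.tri (A.tri χ ζ κ) ξ η
      + A.tri χ ζ (A.tri κ ξ η) - A.tri χ κ (A.tri ζ ξ η) = 0)

end TriAlg

/-- Classification of 2-dimensional real Lie triple systems (normal form,
type (I)): there is a basis u, v with ⟨u;u,v⟩ = e•u + f•v and
⟨v;u,v⟩ = k•u − e•v for some reals e, f, k. -/
theorem two_dim_lts_normal_form {V : Type*} [AddCommGroup V] [Module ℝ V]
    (hdim : Module.finrank ℝ V = 2) (A : TriAlg V) (hA : A.IsLTS) :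
    ∃ (B : Module.Basis (Fin 2) ℝ V) (e f k : ℝ),
      A.tri (B 0) (B 0) (B 1) = e • B 0 + f • B 1 ∧
      A.tri (B 1) (B 0) (B 1) = k • B 0 - e • B 1 := by
  have hfd : FiniteDimensional ℝ V := FiniteDimensional.of_finrank_eq_succ hdim
  let B : Module.Basis (Fin 2) ℝ V := Module.finBasisOfFinrankEq ℝ V hdim
  set u := B 0 with hu
  set v := B 1 with hv
  -- derived: tri x y y = 0
  have hyy : ∀ x y : V, A.tri x y y = 0 := by
    intro x y
    have h := A.tri_skew x y y
    have h2 : (2:ℝ) • A.tri x y y = 0 := by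
      rw [two_smul]; nth_rewrite 2 [h]; simp
    have := smul_eq_zero.mp h2
    rcases this with h' | h'
    · norm_num at h'
    · exact h'
  -- third-argument linearity
  have tri_add_trd : ∀ x y z w : V, A.tri x y (z + w) = A.tri x y z + A.tri x y w := by
    intro x y z w
    rw [A.tri_skew, A.tri_add_snd, neg_add, ← A.tri_skew, ← A.tri_skew]
  have tri_smul_trd : ∀ (r : ℝ) (x y z : V), A.tri x y (r • z) = r • A.tri x y z := by
    intro r x y z
    rw [A.tri_skew, A.tri_smul_snd, ← smul_neg, ← A.tri_skew]
  have hrep : ∀ x : V, x = B.repr x 0 • u + B.repr x 1 • v := by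
    intro x
    have := B.sum_repr x
    rw [Fin.sum_univ_two] at this
    exact this.symm
  set a := B.repr (A.tri u u v) 0 with ha
  set b := B.repr (A.tri u u v) 1 with hb
  set c := B.repr (A.tri v u v) 0 with hc
  set d := B.repr (A.tri v u v) 1 with hd
  have huuv : A.tri u u v = a • u + b • v := hrep _
  have hvuv : A.tri v u v = c • u + d • v := hrep _
  have key : ∀ χ : V, (a + d) • A.tri χ u v = 0 := by
    intro χ
    have h2 := hA.2 u v u v χ
    rw [sub_self, zero_add, sub_eq_zero] at h2
    rw [huuv, hvuv, tri_add_trd, tri_add_trd, tri_smul_trd, tri_smul_trd,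
      tri_smul_trd, tri_smul_trd, hyy, hyy, smul_zero, smul_zero] at h2
    have hvu : A.tri χ v u = -A.tri χ u v := by rw [A.tri_skew]
    rw [hvu] at h2
    rw [add_smul]
    have : a • A.tri χ u v + d • A.tri χ u v = 0 := by
      rw [zero_add] at h2
      rw [add_comm]
      rw [h2]
      simp
    exact this
  have coord : ∀ (χ : V) (i : Fin 2), (a + d) * B.repr (A.tri χ u v) i = 0 := by
    intro χ i
    have := congrArg (fun w => B.repr w i) (key χ)
    simpa using this
  have h1 : (a + d) * a = 0 := coord u 0
  have h4 : (a + d) * d = 0 := coord v 1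
  have had : a + d = 0 := by
    have hsq : (a + d) * (a + d) = 0 := by linear_combination h1 + h4
    exact mul_self_eq_zero.mp hsq
  refine ⟨B, a, b, c, huuv, ?_⟩
  have hdeq : d = -a := by linarith
  rw [hvuv, hdeq, neg_smul, sub_eq_add_neg]
end

section
/- Type (V) algebras are Bol algebras: Let c, d, e, f, k be arbitrary real numbers. On V = ℝ² with standard basis u = (1,0), v = (0,1), let * be the unique bilinear skew-symmetric operation with u*v = c·u + d·v, and let ⟨;,⟩ be the unique trilinear operation skew-symmetric in its last two arguments with ⟨u;u,v⟩ = e·u + f·v and ⟨v;u,v⟩ = k·u − e·v. Then (V, *, ⟨;,⟩) satisfies the Bol algebra identities, i.e. for all ξ,η,ζ,κ,χ ∈ V: ⟨ξ;η,ζ⟩ + ⟨η;ζ,ξ⟩ + ⟨ζ;ξ,η⟩ = 0; ⟨ξ*η;ζ,κ⟩ − ⟨ζ*κ;ξ,η⟩ + ζ*⟨κ;ξ,η⟩ − κ*⟨ζ;ξ,η⟩ + (ξ*η)*(ζ*κ) = 0; ⟨⟨χ;ξ,η⟩;ζ,κ⟩ − ⟨⟨χ;ζ,κ⟩;ξ,η⟩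 + ⟨χ;ζ,⟨κ;ξ,η⟩⟩ − ⟨χ;κ,⟨ζ;ξ,η⟩⟩ = 0. -/
namespace StarTriAlg

variable {V : Type*} [AddCommGroup V] [Module ℝ V] (A : StarTriAlg V)

lemma star_add_right (x y z : V) : A.star x (y + z) = A.star x y + A.star x z := by
  rw [A.star_skew, A.star_add_left, A.star_skew y x, A.star_skew z x]; abel

lemma star_smul_right (r : ℝ) (x y : V) : A.star x (r • y) = r • A.star x y := by
  rw [A.star_skew, A.star_smul_left, A.star_skew y x, smul_neg, neg_neg]

lemma star_self (x : V) : A.star x x = 0 := by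
  have h : (2 : ℝ) • A.star x x = 0 := by
    rw [two_smul]
    nth_rewrite 2 [A.star_skew]
    abel
  simpa using (smul_eq_zero.mp h).resolve_left (by norm_num)

lemma tri_add_thd (x y z w : V) : A.tri x y (z + w) = A.tri x y z + A.tri x y w := by
  rw [A.tri_skew, A.tri_add_snd, A.tri_skew x z y, A.tri_skew x w y]; abel

lemma tri_smul_thd (r : ℝ) (x y z : V) : A.tri x y (r • z) = r • A.tri x y z := by
  rw [A.tri_skew, A.tri_smul_snd, A.tri_skew x z y, smul_neg, neg_neg]

lemma tri_self (x y : V) : A.tri x y y = 0 := by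
  have h : (2 : ℝ) • A.tri x y y = 0 := by
    rw [two_smul]
    nth_rewrite 2 [A.tri_skew]
    abel
  simpa using (smul_eq_zero.mp h).resolve_left (by norm_num)

end StarTriAlg

/-- Type (V) algebras are Bol algebras: on ℝ² with u = (1,0), v = (0,1), the
operations determined by u*v = c•u + d•v, ⟨u;u,v⟩ = e•u + f•v,
⟨v;u,v⟩ = k•u − e•v satisfy the Bol algebra identities. -/
theorem typeV_isBol (c d e f k : ℝ) (A : StarTriAlg (ℝ × ℝ))
    (hstar : A.star ((1 : ℝ), (0 : ℝ)) ((0 : ℝ), (1 : ℝ))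
      = c • ((1 : ℝ), (0 : ℝ)) + d • ((0 : ℝ), (1 : ℝ)))
    (htu : A.tri ((1 : ℝ), (0 : ℝ)) ((1 : ℝ), (0 : ℝ)) ((0 : ℝ), (1 : ℝ))
      = e • ((1 : ℝ), (0 : ℝ)) + f • ((0 : ℝ), (1 : ℝ)))
    (htv : A.tri ((0 : ℝ), (1 : ℝ)) ((1 : ℝ), (0 : ℝ)) ((0 : ℝ), (1 : ℝ))
      = k • ((1 : ℝ), (0 : ℝ)) - e • ((0 : ℝ), (1 : ℝ))) :
    A.IsBol := by
  set u : ℝ × ℝ := ((1 : ℝ), (0 : ℝ)) with hu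
  set v : ℝ × ℝ := ((0 : ℝ), (1 : ℝ)) with hv
  have hdec : ∀ p : ℝ × ℝ, p = p.1 • u + p.2 • v := by
    intro p
    refine Prod.ext ?_ ?_ <;> simp [hu, hv]
  have hvu : A.star v u = -(c • u + d • v) := by rw [A.star_skew, hstar]
  have star_key : ∀ a b a' b' : ℝ,
      A.star (a • u + b • v) (a' • u + b' • v) = (a * b' - a' * b) • (c • u + d • v) := by
    intro a b a' b'
    rw [A.star_add_left, A.star_smul_left, A.star_smul_left,
      A.star_add_right, A.star_add_right, A.star_smul_right, A.star_smul_right,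
      A.star_smul_right, A.star_smul_right, A.star_self, A.star_self, hstar, hvu]
    module
  have star_eq : ∀ x y : ℝ × ℝ,
      A.star x y = (x.1 * y.2 - y.1 * x.2) • (c • u + d • v) := by
    intro x y
    rw [hdec x, hdec y, star_key]
    simp [hu, hv]
  have htvu : A.tri u v u = -(e • u + f • v) := by rw [A.tri_skew, htu]
  have htvv : A.tri v v u = -(k • u - e • v) := by rw [A.tri_skew, htv]
  have tri_key : ∀ p q a b a' b' : ℝ,
      A.tri (p • u + q • v) (a • u + b • v) (a' • u + b' • v)
        = (a * b' - a' * b) • (p • (e • u + f • v) + q • (k • u - e • v)) := by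
    intro p q a b a' b'
    rw [A.tri_add_fst, A.tri_smul_fst, A.tri_smul_fst,
      A.tri_add_snd, A.tri_add_snd, A.tri_smul_snd, A.tri_smul_snd,
      A.tri_smul_snd, A.tri_smul_snd,
      A.tri_add_thd, A.tri_add_thd, A.tri_add_thd, A.tri_add_thd,
      A.tri_smul_thd, A.tri_smul_thd, A.tri_smul_thd, A.tri_smul_thd,
      A.tri_smul_thd, A.tri_smul_thd, A.tri_smul_thd, A.tri_smul_thd,
      A.tri_self, A.tri_self, A.tri_self, A.tri_self,
      htu, htv, htvu, htvv]
    module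
  have tri_eq : ∀ x y z : ℝ × ℝ,
      A.tri x y z = (y.1 * z.2 - z.1 * y.2)
        • (x.1 • (e • u + f • v) + x.2 • (k • u - e • v)) := by
    intro x y z
    rw [hdec x, hdec y, hdec z, tri_key]
    simp [hu, hv]
  refine ⟨?_, ?_, ?_⟩
  · intro ξ η ζ
    rw [tri_eq, tri_eq, tri_eq]
    refine Prod.ext ?_ ?_ <;> simp [hu, hv] <;> ring
  · intro ξ η ζ κ
    simp only [star_eq, tri_eq]
    refine Prod.ext ?_ ?_ <;> simp [hu, hv] <;> ring
  · intro ξ η ζ κ χ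
    simp only [tri_eq]
    refine Prod.ext ?_ ?_ <;> simp [hu, hv] <;> ring
end

section
/- Type (I) algebras are Lie triple systems: Let e, f, k be arbitrary real numbers. On V = ℝ² with standard basis u = (1,0), v = (0,1), let ⟨;,⟩ be the unique trilinear operation skew-symmetric in its last two arguments with ⟨u;u,v⟩ = e·u + f·v and ⟨v;u,v⟩ = k·u − e·v. Then (V, ⟨;,⟩) is a Lie triple system, i.e. for all ξ,η,ζ,κ,χ ∈ V: ⟨ξ;η,ζ⟩ + ⟨η;ζ,ξ⟩ + ⟨ζ;ξ,η⟩ = 0 and ⟨⟨χ;ξ,η⟩;ζ,κ⟩ − ⟨⟨χ;ζ,κ⟩;ξ,η⟩ + ⟨χ;ζ,⟨κ;ξ,η⟩⟩ − ⟨χ;κ,⟨ζ;ξ,η⟩⟩ = 0. -/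
/-- Type (I) algebras are Lie triple systems: on ℝ² with u = (1,0), v = (0,1),
the trilinear operation determined by ⟨u;u,v⟩ = e•u + f•v,
⟨v;u,v⟩ = k•u − e•v satisfies the Lie triple system identities. -/
theorem typeI_isLTS (e f k : ℝ) (A : TriAlg (ℝ × ℝ))
    (htu : A.tri ((1 : ℝ), (0 : ℝ)) ((1 : ℝ), (0 : ℝ)) ((0 : ℝ), (1 : ℝ))
      = e • ((1 : ℝ), (0 : ℝ)) + f • ((0 : ℝ), (1 : ℝ)))
    (htv : A.tri ((0 : ℝ), (1 : ℝ)) ((1 : ℝ), (0 : ℝ)) ((0 : ℝ), (1 : ℝ))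
      = k • ((1 : ℝ), (0 : ℝ)) - e • ((0 : ℝ), (1 : ℝ))) :
    A.IsLTS := by
  -- linearity in the third argument, via skew-symmetry
  have tri_add_thd : ∀ x y z w : ℝ × ℝ,
      A.tri x y (z + w) = A.tri x y z + A.tri x y w := by
    intro x y z w
    rw [A.tri_skew x y (z + w), A.tri_add_snd, A.tri_skew x y z, A.tri_skew x y w]
    abel
  have tri_smul_thd : ∀ (r : ℝ) (x y z : ℝ × ℝ),
      A.tri x y (r • z) = r • A.tri x y z := by
    intro r x y z
    rw [A.tri_skew x y (r • z), A.tri_smul_snd, A.tri_skew x y z, smul_neg]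
  have h0 : ∀ x y : ℝ × ℝ, A.tri x y y = 0 := by
    intro x y
    have h2 : (2 : ℝ) • A.tri x y y = 0 := by
      rw [two_smul]
      nth_rewrite 1 [A.tri_skew x y y]
      simp
    exact (smul_eq_zero.mp h2).resolve_left (by norm_num)
  have hswap : ∀ x : ℝ × ℝ,
      A.tri x ((0 : ℝ), (1 : ℝ)) ((1 : ℝ), (0 : ℝ))
        = -A.tri x ((1 : ℝ), (0 : ℝ)) ((0 : ℝ), (1 : ℝ)) :=
    fun x => A.tri_skew x _ _
  have hx : ∀ x : ℝ × ℝ,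
      x = x.1 • ((1 : ℝ), (0 : ℝ)) + x.2 • ((0 : ℝ), (1 : ℝ)) := by
    intro x
    simp [Prod.ext_iff]
  have key : ∀ x y z : ℝ × ℝ, A.tri x y z =
      ((y.1 * z.2 - y.2 * z.1) * (x.1 * e + x.2 * k),
       (y.1 * z.2 - y.2 * z.1) * (x.1 * f - x.2 * e)) := by
    intro x y z
    conv_lhs => rw [hx x, hx y, hx z]
    rw [A.tri_add_fst, A.tri_smul_fst, A.tri_smul_fst]
    simp only [A.tri_add_snd, A.tri_smul_snd, tri_add_thd, tri_smul_thd,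
      h0, hswap, htu, htv]
    simp only [smul_zero, add_zero, zero_add, smul_neg, smul_add, smul_sub,
      smul_smul, Prod.smul_mk, Prod.mk_add_mk, Prod.neg_mk, Prod.mk_sub_mk,
      Prod.ext_iff, smul_eq_mul]
    constructor <;> ring
  refine ⟨fun ξ η ζ => ?_, fun ξ η ζ κ χ => ?_⟩ <;>
    simp only [key, Prod.mk_add_mk, Prod.mk_sub_mk, Prod.ext_iff, Prod.fst_zero, Prod.snd_zero] <;>
    constructor <;> ring
end
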